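/- arXiv:2402.04927 — 5 statements merged into one kernel-verified Lean document; each statement's English description precedes it below -/
import Mathlib

section
/- Let α ∈ (1,2) and let X₁, X₂, … be i.i.d. copies of X. Then for every real z > 0 and every integer t ≥ c^{1-α}, the probability P(∑_{i=1}^t X_i < z·C·t^{1/(α-1)}) is strictly greater than 7/8 − 1/z. -/
/-!
Truncate every `Xᵢ` at `s = ⌈m⌉` with `m = c t^{1/(α-1)}`. Comparing with `∫ x^{-α}`,
`P(X > s) ≤ β m^{1-α}/(α-1) = 1/(8t)`, so with probability at least `7/8` no `Xᵢ` is truncated.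
Comparing with `∫ x^{1-α}`, `E[X; X ≤ s] ≤ β (2m)^{2-α}/(2-α)`, and `C` is chosen so that `t` times
this is `C · P(X < m + 1) · t^{1/(α-1)}`; Markov's inequality then bounds the probability that the
truncated sum reaches `z C t^{1/(α-1)}` by `P(X < m + 1)/z < 1/z`.
-/

open MeasureTheory ProbabilityTheory Real Filter

/-- The normalising constant `β(α) = (∑_{i≥1} i^{-α})⁻¹` of the power law. -/
noncomputable def betaPL (α : ℝ) : ℝ := (∑' i : ℕ, ((i : ℝ) + 1) ^ (-α))⁻¹

/-- The constant `c = ((α-1)/(8β))^{1/(1-α)}`. -/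
noncomputable def cPL (α : ℝ) : ℝ := ((α - 1) / (8 * betaPL α)) ^ ((1 : ℝ) / (1 - α))

/-- `P(X < x)` for the power-law random variable `X`. -/
noncomputable def PXlt (α : ℝ) (x : ℝ) : ℝ :=
  ∑' i : ℕ, if ((i : ℝ) + 1) < x then betaPL α * ((i : ℝ) + 1) ^ (-α) else 0

/-- The constant `C = C(α,t) = β (2c)^{2-α} / ((2-α) P(X < c t^{1/(α-1)} + 1))`. -/
noncomputable def CPL (α : ℝ) (t : ℕ) : ℝ :=
  betaPL α * (2 * cPL α) ^ (2 - α) /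
    ((2 - α) * PXlt α (cPL α * (t : ℝ) ^ (1 / (α - 1)) + 1))

open Finset

-- Mean value theorem for `x ^ p` on `[a, a + 1]`; `hpa` excludes `a = 0` with `p < 0`, where
-- Lean's `0 ^ p = 0` would break the inequality.
lemma rpow_sub_one_le_sub_rpow_div {p a : ℝ} (hp₀ : p ≠ 0) (hp₁ : p ≤ 1) (ha : 0 ≤ a)
    (hpa : 0 < p ∨ 0 < a) : (a + 1) ^ (p - 1) ≤ ((a + 1) ^ p - a ^ p) / p := by
  have hcont : ContinuousOn (fun x : ℝ => x ^ p) (Set.Icc a (a + 1)) := by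
    refine continuousOn_id.rpow_const fun x hx => ?_
    rcases hpa with hp | ha
    · exact Or.inr hp.le
    · exact Or.inl (ha.trans_le hx.1).ne'
  obtain ⟨ξ, hξ, hslope⟩ := exists_hasDerivAt_eq_slope (fun x : ℝ => x ^ p)
    (fun x => p * x ^ (p - 1)) (lt_add_one a) hcont
    fun x hx => hasDerivAt_rpow_const (Or.inl (ha.trans_lt hx.1).ne')
  rw [add_sub_cancel_left, div_one] at hslope
  rw [← hslope, mul_div_cancel_left₀ _ hp₀]
  exact rpow_le_rpow_of_nonpos (ha.trans_lt hξ.1) hξ.2.le (by linarith)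

lemma sum_Icc_rpow_sub_one_le {p : ℝ} (hp₀ : 0 < p) (hp₁ : p ≤ 1) (n : ℕ) :
    ∑ k ∈ Icc 1 n, (k : ℝ) ^ (p - 1) ≤ (n : ℝ) ^ p / p := by
  induction n with
  | zero => simp [zero_rpow hp₀.ne']
  | succ n ih =>
    rw [sum_Icc_succ_top (by omega), Nat.cast_succ]
    have hstep := rpow_sub_one_le_sub_rpow_div hp₀.ne' hp₁ n.cast_nonneg (Or.inl hp₀)
    calc _ ≤ (n : ℝ) ^ p / p + ((n + 1 : ℝ) ^ p - (n : ℝ) ^ p) / p := add_le_add ih hstep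
      _ = _ := by ring

lemma sum_range_add_rpow_sub_one_le {p x : ℝ} (hp : p < 0) (hx : 0 < x) (n : ℕ) :
    ∑ j ∈ range n, (x + j + 1) ^ (p - 1) ≤ x ^ p / -p := by
  calc ∑ j ∈ range n, (x + j + 1) ^ (p - 1)
      ≤ ∑ j ∈ range n, ((x + (j + 1 : ℕ)) ^ p / p - (x + j) ^ p / p) := by
        gcongr with j
        push_cast
        rw [← add_assoc, ← sub_div]
        exact rpow_sub_one_le_sub_rpow_div hp.ne (by linarith) (by positivity)
          (Or.inr (by positivity))
    _ = (x + n) ^ p / p - x ^ p / p := by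
        rw [sum_range_sub (fun j : ℕ => (x + j) ^ p / p)]; simp
    _ ≤ x ^ p / -p := by
        have : (x + n) ^ p / p ≤ 0 := div_nonpos_of_nonneg_of_nonpos (by positivity) hp.le
        rw [div_neg]
        linarith

section Constants

variable {α : ℝ}

lemma summable_add_one_rpow_neg (hα : 1 < α) : Summable fun i : ℕ => ((i : ℝ) + 1) ^ (-α) := by
  simpa using (summable_nat_add_iff 1).2 (Real.summable_nat_rpow.2 (neg_lt_neg hα))

lemma one_le_tsum_add_one_rpow_neg (hα : 1 < α) : 1 ≤ ∑' i : ℕ, ((i : ℝ) + 1) ^ (-α) := by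
  simpa using (summable_add_one_rpow_neg hα).le_tsum 0 fun j _ => by positivity

lemma betaPL_pos (hα : 1 < α) : 0 < betaPL α :=
  inv_pos.2 (zero_lt_one.trans_le (one_le_tsum_add_one_rpow_neg hα))

lemma betaPL_mul_tsum (hα : 1 < α) : betaPL α * ∑' i : ℕ, ((i : ℝ) + 1) ^ (-α) = 1 :=
  inv_mul_cancel₀ (zero_lt_one.trans_le (one_le_tsum_add_one_rpow_neg hα)).ne'

lemma PXlt_eq_mul_tsum (α x : ℝ) :
    PXlt α x = betaPL α * ∑' i : ℕ, if (i : ℝ) + 1 < x then ((i : ℝ) + 1) ^ (-α) else 0 := by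
  rw [PXlt, ← tsum_mul_left]
  exact tsum_congr fun i => by split_ifs <;> simp

lemma summable_ite_add_one_rpow_neg (hα : 1 < α) (x : ℝ) :
    Summable fun i : ℕ => if (i : ℝ) + 1 < x then ((i : ℝ) + 1) ^ (-α) else 0 :=
  (summable_add_one_rpow_neg hα).of_nonneg_of_le (fun i => by split_ifs <;> positivity)
    fun i => by split_ifs <;> first | rfl | positivity

lemma PXlt_pos (hα : 1 < α) {x : ℝ} (hx : 1 < x) : 0 < PXlt α x := by
  rw [PXlt_eq_mul_tsum]
  refine mul_pos (betaPL_pos hα) ((summable_ite_add_one_rpow_neg hα x).tsum_pos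
    (fun i => by split_ifs <;> positivity) 0 ?_)
  simp [hx]

lemma PXlt_lt_one (hα : 1 < α) (x : ℝ) : PXlt α x < 1 := by
  rw [PXlt_eq_mul_tsum]
  refine (mul_lt_mul_of_pos_left (Summable.tsum_lt_tsum_of_nonneg (i := ⌈x⌉₊)
    (fun i => by split_ifs <;> positivity) (fun i => by split_ifs <;> first | rfl | positivity)
    ?_ (summable_add_one_rpow_neg hα)) (betaPL_pos hα)).trans_eq (betaPL_mul_tsum hα)
  rw [if_neg (by linarith [Nat.le_ceil x])]
  positivity

lemma cPL_pos (hα : 1 < α) : 0 < cPL α :=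
  rpow_pos_of_pos (div_pos (by linarith) (by linarith [betaPL_pos hα])) _

lemma cPL_rpow_one_sub (hα : 1 < α) : cPL α ^ (1 - α) = (α - 1) / (8 * betaPL α) := by
  rw [cPL, ← rpow_mul (div_pos (by linarith) (by linarith [betaPL_pos hα])).le,
    one_div_mul_cancel (by linarith), rpow_one]

lemma rpow_rpow_eq_inv_of_mul_eq_neg_one {x a b : ℝ} (hx : 0 ≤ x) (hab : a * b = -1) :
    (x ^ a) ^ b = x⁻¹ := by
  rw [← rpow_mul hx, hab, rpow_neg_one]

lemma one_div_sub_one_mul_one_sub (hα : α ≠ 1) : 1 / (α - 1) * (1 - α) = -1 := by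
  field_simp [sub_ne_zero.2 hα]; ring

lemma one_le_cPL_mul_rpow (hα : 1 < α) {t : ℝ} (ht : cPL α ^ (1 - α) ≤ t) :
    1 ≤ cPL α * t ^ (1 / (α - 1)) := by
  have hc := cPL_pos hα
  have hmono : (cPL α ^ (1 - α)) ^ (1 / (α - 1)) ≤ t ^ (1 / (α - 1)) :=
    rpow_le_rpow (by positivity) ht (div_nonneg zero_le_one (by linarith))
  rw [rpow_rpow_eq_inv_of_mul_eq_neg_one hc.le
    ((mul_comm _ _).trans (one_div_sub_one_mul_one_sub hα.ne'))] at hmono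
  calc 1 = cPL α * (cPL α)⁻¹ := (mul_inv_cancel₀ hc.ne').symm
    _ ≤ _ := by gcongr

lemma cPL_mul_rpow_rpow_one_sub (hα : 1 < α) {t : ℝ} (ht : 0 < t) :
    (cPL α * t ^ (1 / (α - 1))) ^ (1 - α) = (α - 1) / (8 * betaPL α * t) := by
  rw [mul_rpow (cPL_pos hα).le (by positivity), cPL_rpow_one_sub hα,
    rpow_rpow_eq_inv_of_mul_eq_neg_one ht.le (one_div_sub_one_mul_one_sub hα.ne')]
  field_simp

lemma CPL_mul_PXlt_mul_rpow (hα₁ : 1 < α) (hα₂ : α < 2) {t : ℕ} (ht : 0 < t) :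
    CPL α t * PXlt α (cPL α * (t : ℝ) ^ (1 / (α - 1)) + 1) * (t : ℝ) ^ (1 / (α - 1)) =
      t * (betaPL α * (2 * (cPL α * (t : ℝ) ^ (1 / (α - 1)))) ^ (2 - α) / (2 - α)) := by
  have ht' : (0 : ℝ) < t := by exact_mod_cast ht
  rw [CPL]
  set T := (t : ℝ) ^ (1 / (α - 1))
  have hT : 0 < T := by positivity
  have hP : PXlt α (cPL α * T + 1) ≠ 0 :=
    (PXlt_pos hα₁ (by have := cPL_pos hα₁; nlinarith)).ne'
  have hT2 : T ^ (2 - α) = T / t := by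
    rw [show 2 - α = 1 + (1 - α) by ring, rpow_add hT, rpow_one,
      rpow_rpow_eq_inv_of_mul_eq_neg_one ht'.le (one_div_sub_one_mul_one_sub hα₁.ne'),
      div_eq_mul_inv]
  rw [← mul_assoc, mul_rpow (by linarith [cPL_pos hα₁]) hT.le, hT2]
  field_simp [(by linarith : 2 - α ≠ 0)]

lemma CPL_pos (hα₁ : 1 < α) (hα₂ : α < 2) {t : ℕ} (ht : 0 < t) : 0 < CPL α t := by
  have hP := PXlt_pos hα₁ (lt_add_of_pos_left 1 (mul_pos (cPL_pos hα₁)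
    (rpow_pos_of_pos (Nat.cast_pos.2 ht) (1 / (α - 1)))))
  have := betaPL_pos hα₁
  have := cPL_pos hα₁
  have : 0 < 2 - α := by linarith
  unfold CPL
  positivity

end Constants

def truncAt (s k : ℕ) : ℝ := if k ≤ s then k else 0

lemma truncAt_nonneg (s k : ℕ) : 0 ≤ truncAt s k := by
  unfold truncAt; split_ifs <;> positivity

lemma truncAt_le (s k : ℕ) : truncAt s k ≤ s := by
  unfold truncAt; split_ifs with h
  · exact_mod_cast h
  · positivity

section NatValued

variable {Ω : Type*} [MeasurableSpace Ω] {μ : Measure Ω} {Y : Ω → ℕ}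

lemma integrable_truncAt_comp [IsFiniteMeasure μ] (hY : Measurable Y) (s : ℕ) :
    Integrable (fun ω => truncAt s (Y ω)) μ :=
  Integrable.of_bound (C := s) ((measurable_from_nat (f := truncAt s)).comp hY).aestronglyMeasurable
    (ae_of_all _ fun ω => by
      rw [Real.norm_of_nonneg (truncAt_nonneg _ _)]; exact truncAt_le _ _)

lemma integral_truncAt_comp [IsFiniteMeasure μ] (hY : Measurable Y) (s : ℕ) :
    ∫ ω, truncAt s (Y ω) ∂μ = ∑ k ∈ Icc 1 s, (k : ℝ) * μ.real {ω | Y ω = k} := by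
  have hmeas (k : ℕ) : MeasurableSet {ω | Y ω = k} := hY (measurableSet_singleton k)
  have h (ω : Ω) :
      truncAt s (Y ω) = ∑ k ∈ Icc 1 s, {ω | Y ω = k}.indicator (fun _ => (k : ℝ)) ω := by
    simp only [truncAt, Set.indicator_apply, Set.mem_ofPred_eq, sum_ite_eq, mem_Icc]
    split_ifs <;> simp_all
  simp_rw [h]
  rw [integral_finsetSum _ fun k _ => (integrable_const _).indicator (hmeas k)]
  refine sum_congr rfl fun k _ => ?_
  rw [integral_indicator_const _ (hmeas k), smul_eq_mul, mul_comm]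

lemma measureReal_lt_le_of_sum_range_le [IsFiniteMeasure μ] (hY : Measurable Y) (s : ℕ) {B : ℝ}
    (hB : 0 ≤ B) (h : ∀ n, ∑ j ∈ range n, μ.real {ω | Y ω = s + j + 1} ≤ B) :
    μ.real {ω | s < Y ω} ≤ B := by
  have hunion : {ω | s < Y ω} = ⋃ j : ℕ, {ω | Y ω = s + j + 1} := by
    ext ω
    simp only [Set.mem_ofPred_eq, Set.mem_iUnion]
    exact ⟨fun h => ⟨Y ω - s - 1, by omega⟩, fun ⟨j, hj⟩ => by omega⟩
  have hdisj : Pairwise (Function.onFun Disjoint fun j : ℕ => {ω | Y ω = s + j + 1}) :=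
    fun i j hij => Set.disjoint_left.2 fun ω hi hj => hij (by simp_all)
  rw [measureReal_def, hunion, measure_iUnion hdisj fun j => hY (measurableSet_singleton _)]
  refine ENNReal.toReal_le_of_le_ofReal hB (ENNReal.tsum_le_of_sum_range_le fun n => ?_)
  rw [ENNReal.le_ofReal_iff_toReal_le (by simp [measure_ne_top]) hB,
    ENNReal.toReal_sum fun j _ => measure_ne_top μ _]
  exact h n

lemma measureReal_le_sum_measureReal_add_integral_truncAt_div [IsFiniteMeasure μ] {ι : Type*}
    (I : Finset ι) {X : ι → Ω → ℕ} (hX : ∀ i, Measurable (X i)) (s : ℕ) {a : ℝ} (ha : 0 < a) :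
    μ.real {ω | a ≤ ∑ i ∈ I, (X i ω : ℝ)} ≤
      ∑ i ∈ I, μ.real {ω | s < X i ω} + (∑ i ∈ I, ∫ ω, truncAt s (X i ω) ∂μ) / a := by
  set W : Ω → ℝ := fun ω => ∑ i ∈ I, truncAt s (X i ω)
  have hsub : {ω | a ≤ ∑ i ∈ I, (X i ω : ℝ)} ⊆ (⋃ i ∈ I, {ω | s < X i ω}) ∪ {ω | a ≤ W ω} := by
    intro ω hω
    by_cases hbig : ∃ i ∈ I, s < X i ω
    · left; simpa using hbig
    · push Not at hbig
      right
      have hWX : W ω = ∑ i ∈ I, (X i ω : ℝ) :=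
        sum_congr rfl fun i hi => if_pos (hbig i hi)
      simpa [hWX] using hω
  have hmarkov : μ.real {ω | a ≤ W ω} ≤ (∫ ω, W ω ∂μ) / a := by
    rw [le_div_iff₀' ha]
    exact mul_meas_ge_le_integral_of_nonneg
      (ae_of_all _ fun ω => sum_nonneg fun i _ => truncAt_nonneg _ _)
      (integrable_finsetSum _ fun i _ => integrable_truncAt_comp (hX i) s) a
  calc _ ≤ μ.real ((⋃ i ∈ I, {ω | s < X i ω}) ∪ {ω | a ≤ W ω}) := measureReal_mono hsub
    _ ≤ μ.real (⋃ i ∈ I, {ω | s < X i ω}) + μ.real {ω | a ≤ W ω} := measureReal_union_le _ _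
    _ ≤ _ := by
      gcongr
      · exact measureReal_biUnion_finset_le _ _
      · rwa [← integral_finsetSum _ fun i _ => integrable_truncAt_comp (hX i) s]

lemma one_sub_le_measureReal_sum_lt [IsProbabilityMeasure μ] {ι : Type*} (I : Finset ι)
    {X : ι → Ω → ℕ} (hX : ∀ i, Measurable (X i)) (s : ℕ) {a : ℝ} (ha : 0 < a) :
    1 - (∑ i ∈ I, μ.real {ω | s < X i ω} + (∑ i ∈ I, ∫ ω, truncAt s (X i ω) ∂μ) / a) ≤
      μ.real {ω | ∑ i ∈ I, (X i ω : ℝ) < a} := by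
  have hsum : Measurable fun ω => ∑ i ∈ I, (X i ω : ℝ) :=
    Finset.measurable_sum _ fun i _ => (measurable_from_nat (f := Nat.cast)).comp (hX i)
  have hcompl : {ω | a ≤ ∑ i ∈ I, (X i ω : ℝ)}ᶜ = {ω | ∑ i ∈ I, (X i ω : ℝ) < a} := by
    ext; simp
  rw [← hcompl, probReal_compl_eq_one_sub (measurableSet_le measurable_const hsum)]
  linarith [measureReal_le_sum_measureReal_add_integral_truncAt_div (μ := μ) I hX s ha]

end NatValued

section PowerLaw

variable {Ω : Type*} [MeasurableSpace Ω] {μ : Measure Ω} {Y : Ω → ℕ} {α b : ℝ}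

lemma measureReal_eq_of_law (hb : 0 ≤ b)
    (hlaw : ∀ i : ℕ, 1 ≤ i → μ {ω | Y ω = i} = ENNReal.ofReal (b * (i : ℝ) ^ (-α)))
    {i : ℕ} (hi : 1 ≤ i) : μ.real {ω | Y ω = i} = b * (i : ℝ) ^ (-α) := by
  rw [measureReal_def, hlaw i hi, ENNReal.toReal_ofReal (by positivity)]

lemma measureReal_lt_le_of_law [IsFiniteMeasure μ] (hα : 1 < α) (hb : 0 ≤ b) (hY : Measurable Y)
    (hlaw : ∀ i : ℕ, 1 ≤ i → μ {ω | Y ω = i} = ENNReal.ofReal (b * (i : ℝ) ^ (-α)))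
    {s : ℕ} (hs : 1 ≤ s) : μ.real {ω | s < Y ω} ≤ b * (s : ℝ) ^ (1 - α) / (α - 1) := by
  have hα' : 0 < α - 1 := by linarith
  refine measureReal_lt_le_of_sum_range_le hY s (by positivity) fun n => ?_
  have htail := sum_range_add_rpow_sub_one_le (p := 1 - α) (x := s) (by linarith)
    (by exact_mod_cast hs) n
  rw [sub_sub_cancel_left, neg_sub] at htail
  calc ∑ j ∈ range n, μ.real {ω | Y ω = s + j + 1}
      = b * ∑ j ∈ range n, ((s : ℝ) + j + 1) ^ (-α) := by
        rw [mul_sum]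
        refine sum_congr rfl fun j _ => ?_
        rw [measureReal_eq_of_law hb hlaw (by omega)]
        push_cast; rfl
    _ ≤ b * ((s : ℝ) ^ (1 - α) / (α - 1)) := by gcongr
    _ = _ := by ring

lemma integral_truncAt_le_of_law [IsFiniteMeasure μ] (hα₁ : 1 ≤ α) (hα₂ : α < 2) (hb : 0 ≤ b)
    (hY : Measurable Y)
    (hlaw : ∀ i : ℕ, 1 ≤ i → μ {ω | Y ω = i} = ENNReal.ofReal (b * (i : ℝ) ^ (-α)))
    (s : ℕ) : ∫ ω, truncAt s (Y ω) ∂μ ≤ b * (s : ℝ) ^ (2 - α) / (2 - α) := by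
  have hhead := sum_Icc_rpow_sub_one_le (p := 2 - α) (by linarith) (by linarith) s
  rw [show 2 - α - 1 = 1 - α by ring] at hhead
  calc ∫ ω, truncAt s (Y ω) ∂μ = b * ∑ k ∈ Icc 1 s, (k : ℝ) ^ (1 - α) := by
        rw [integral_truncAt_comp hY, mul_sum]
        refine sum_congr rfl fun k hk => ?_
        have hk0 : (0 : ℝ) < k := by exact_mod_cast (mem_Icc.1 hk).1
        rw [measureReal_eq_of_law hb hlaw (mem_Icc.1 hk).1, sub_eq_add_neg,
          rpow_add hk0, rpow_one]
        ring
    _ ≤ b * ((s : ℝ) ^ (2 - α) / (2 - α)) := by gcongr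
    _ = _ := by ring

lemma measureReal_ceil_lt_le [IsFiniteMeasure μ] (hα : 1 < α) (hY : Measurable Y)
    (hlaw : ∀ i : ℕ, 1 ≤ i → μ {ω | Y ω = i} = ENNReal.ofReal (betaPL α * (i : ℝ) ^ (-α)))
    {t : ℝ} (ht : 0 < t) :
    μ.real {ω | ⌈cPL α * t ^ (1 / (α - 1))⌉₊ < Y ω} ≤ 1 / (8 * t) := by
  set m := cPL α * t ^ (1 / (α - 1))
  have hm : 0 < m := mul_pos (cPL_pos hα) (by positivity)
  have hβ := betaPL_pos hα
  have hα' : 0 < α - 1 := by linarith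
  calc _ ≤ betaPL α * (⌈m⌉₊ : ℝ) ^ (1 - α) / (α - 1) :=
        measureReal_lt_le_of_law hα hβ.le hY hlaw (Nat.one_le_ceil_iff.2 hm)
    _ ≤ betaPL α * m ^ (1 - α) / (α - 1) := by
        have := rpow_le_rpow_of_nonpos hm (Nat.le_ceil m) (by linarith : 1 - α ≤ 0)
        gcongr
    _ = 1 / (8 * t) := by
        rw [cPL_mul_rpow_rpow_one_sub hα ht]
        field_simp

lemma integral_truncAt_ceil_le [IsFiniteMeasure μ] (hα : α ∈ Set.Ioo 1 2) (hY : Measurable Y)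
    (hlaw : ∀ i : ℕ, 1 ≤ i → μ {ω | Y ω = i} = ENNReal.ofReal (betaPL α * (i : ℝ) ^ (-α)))
    {t : ℕ} (ht : cPL α ^ (1 - α) ≤ t) :
    ∫ ω, truncAt ⌈cPL α * (t : ℝ) ^ (1 / (α - 1))⌉₊ (Y ω) ∂μ ≤
      CPL α t * PXlt α (cPL α * (t : ℝ) ^ (1 / (α - 1)) + 1) * (t : ℝ) ^ (1 / (α - 1)) / t := by
  obtain ⟨hα₁, hα₂⟩ := hα
  have ht₀ : 0 < t := by exact_mod_cast (rpow_pos_of_pos (cPL_pos hα₁) _).trans_le ht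
  rw [CPL_mul_PXlt_mul_rpow hα₁ hα₂ ht₀, mul_div_cancel_left₀ _ (by positivity)]
  set m := cPL α * (t : ℝ) ^ (1 / (α - 1))
  have hm : 1 ≤ m := one_le_cPL_mul_rpow hα₁ ht
  have hs : (⌈m⌉₊ : ℝ) ≤ 2 * m := (Nat.ceil_lt_add_one (by linarith)).le.trans (by linarith)
  have hβ := betaPL_pos hα₁
  refine (integral_truncAt_le_of_law hα₁.le hα₂ hβ.le hY hlaw _).trans ?_
  have : 0 < 2 - α := by linarith
  gcongr

end PowerLaw

theorem sum_iid_powerlaw_upper_bound_general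
    {Ω : Type*} [MeasurableSpace Ω] (μ : Measure Ω) [IsProbabilityMeasure μ]
    (α : ℝ) (hα : α ∈ Set.Ioo (1 : ℝ) 2)
    (X : ℕ → Ω → ℕ) (hmeas : ∀ n, Measurable (X n))
    (hdist : ∀ n, ∀ i : ℕ, 1 ≤ i →
      μ {ω | X n ω = i} = ENNReal.ofReal (betaPL α * (i : ℝ) ^ (-α)))
    (z : ℝ) (hz : 0 < z) (t : ℕ) (ht : cPL α ^ (1 - α) ≤ (t : ℝ)) :
    (7 / 8 - 1 / z : ℝ) <
      (μ {ω | (∑ i ∈ Finset.Icc 1 t, (X i ω : ℝ)) <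
          z * CPL α t * (t : ℝ) ^ (1 / (α - 1))}).toReal := by
  have ht₀ : (0 : ℝ) < t := (rpow_pos_of_pos (cPL_pos hα.1) _).trans_le ht
  set T := (t : ℝ) ^ (1 / (α - 1))
  set m := cPL α * T
  set a := z * CPL α t * T with ha_def
  have hC : 0 < CPL α t := CPL_pos hα.1 hα.2 (by exact_mod_cast ht₀)
  have hT : 0 < T := by positivity
  have ha : 0 < a := by positivity
  have htail : ∑ i ∈ Icc 1 t, μ.real {ω | ⌈m⌉₊ < X i ω} ≤ 1 / 8 := by
    refine (sum_le_card_nsmul _ _ _ fun i _ =>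
      measureReal_ceil_lt_le hα.1 (hmeas i) (hdist i) ht₀).trans_eq ?_
    rw [Nat.card_Icc, Nat.add_sub_cancel, nsmul_eq_mul]
    field_simp
  have hmean : (∑ i ∈ Icc 1 t, ∫ ω, truncAt ⌈m⌉₊ (X i ω) ∂μ) / a ≤ PXlt α (m + 1) / z := by
    calc _ ≤ (#(Icc 1 t) • (CPL α t * PXlt α (m + 1) * T / t)) / a := by
          gcongr
          exact sum_le_card_nsmul _ _ _ fun i _ =>
            integral_truncAt_ceil_le hα (hmeas i) (hdist i) ht
      _ = PXlt α (m + 1) / z := by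
          rw [Nat.card_Icc, Nat.add_sub_cancel, nsmul_eq_mul, ha_def]
          field_simp
  have hP : PXlt α (m + 1) / z < 1 / z := by gcongr; exact PXlt_lt_one hα.1 _
  rw [← measureReal_def]
  linarith [one_sub_le_measureReal_sum_lt (μ := μ) (Icc 1 t) hmeas ⌈m⌉₊ ha]

theorem sum_iid_powerlaw_upper_bound
    {Ω : Type*} [MeasurableSpace Ω] (μ : Measure Ω) [IsProbabilityMeasure μ]
    (α : ℝ) (hα : α ∈ Set.Ioo (1 : ℝ) 2)
    (X : ℕ → Ω → ℕ) (hmeas : ∀ n, Measurable (X n))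
    (hdist : ∀ n, ∀ i : ℕ, 1 ≤ i →
      μ {ω | X n ω = i} = ENNReal.ofReal (betaPL α * (i : ℝ) ^ (-α)))
    (hindep : iIndepFun X μ)
    (z : ℝ) (hz : 0 < z) (t : ℕ) (ht : cPL α ^ (1 - α) ≤ (t : ℝ)) :
    (7 / 8 - 1 / z : ℝ) <
      (μ {ω | (∑ i ∈ Finset.Icc 1 t, (X i ω : ℝ)) <
          z * CPL α t * (t : ℝ) ^ (1 / (α - 1))}).toReal :=
  sum_iid_powerlaw_upper_bound_general μ α hα X hmeas hdist z hz t ht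
end

section
/- For each t let Z₁, …, Z_t be i.i.d. copies of Z(t), let L(τ) = ∑_{i=1}^τ Z_i, and let 𝒞 = 𝒞(t) be the event that |L(τ) − E[L(τ)]| ≤ t·log^{2/3} t for every 1 ≤ τ ≤ t. Then P(𝒞) = 1 − o(log^{−2} t); that is, log² t · (1 − P(𝒞(t))) → 0 as t → ∞. -/
/-!
Centre each `Z i`. A centred variable `Y` with `|Y| ≤ N` has `E exp (s Y) ≤ exp (s² E Y²)` for
`|s| N ≤ 1`, because `exp x ≤ 1 + x + x²` on `|x| ≤ 1`. By independence and the Chernoff bound at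
`s = 1/N`, a sum of `τ` such variables with `E Y² ≤ N` deviates by `a` with probability at most
`2 exp (-a/N + τ/N)`. For `Z(t)` take `N = ⌊t log log t + 1⌋`: the tail `P(Z = k) ≤ 1/k²` gives
`E Z² ≤ N` and `E Z ≤ 1 + log N ≤ 3 log t`.

A union bound over all `τ ≤ t` would lose a factor `t`, so the deviation is only controlled, by
`a = t log^{2/3} t / 2`, at the `O(log^{1/3} t)` checkpoints spaced `Δ ≈ t / (6 log^{1/3} t)` apart.
Between checkpoints the partial sums are monotone and their means grow by at most
`Δ (1 + log N) ≤ a`, so every deviation is at most `2a`. With `r = log^{1/3} t` the failure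
probability is `O(r exp (-r² / (24 log r)))`, which is `o(r⁻⁶) = o(log⁻² t)`.
-/

open MeasureTheory ProbabilityTheory Real Filter

noncomputable def beta2 : ℝ := 6 / Real.pi ^ 2

noncomputable def truncpt (t : ℕ) : ℝ := (t : ℝ) * Real.log (Real.log (t : ℝ)) + 1

noncomputable def P2lt (x : ℝ) : ℝ :=
  ∑' i : ℕ, if ((i : ℝ) + 1) < x then beta2 / ((i : ℝ) + 1) ^ 2 else 0

noncomputable def betapp (t : ℕ) : ℝ := beta2 / P2lt (truncpt t)

open Topology

lemma exp_le_one_add_add_sq {x : ℝ} (hx : |x| ≤ 1) : exp x ≤ 1 + x + x ^ 2 := by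
  have := (abs_le.mp (abs_exp_sub_one_sub_id_le hx)).2
  linarith

lemma sum_Icc_one_sub_sum_Icc_one_le {m : ℕ → ℝ} {b : ℝ} (hm : ∀ i, m i ≤ b) {τ τ' : ℕ}
    (h : τ ≤ τ') : ∑ i ∈ Finset.Icc 1 τ', m i - ∑ i ∈ Finset.Icc 1 τ, m i ≤ (τ' - τ : ℕ) * b := by
  rw [show (1 : ℕ) = 0 + 1 from rfl, Finset.Icc_add_one_left_eq_Ioc,
    Finset.Icc_add_one_left_eq_Ioc, ← Finset.sum_Ioc_consecutive m (Nat.zero_le τ) h,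
    add_sub_cancel_left, ← Nat.card_Ioc, ← nsmul_eq_mul]
  exact Finset.sum_le_card_nsmul _ _ _ fun i _ => hm i

def checkpoints (t Δ : ℕ) : Finset ℕ :=
  (Finset.range (t / Δ + 2)).image fun k => min (k * Δ) t

namespace checkpoints

lemma le_of_mem {t Δ g : ℕ} (hg : g ∈ checkpoints t Δ) : g ≤ t := by
  obtain ⟨k, -, rfl⟩ := Finset.mem_image.mp hg
  exact min_le_right _ _

lemma card_le (t Δ : ℕ) : (checkpoints t Δ).card ≤ t / Δ + 2 :=
  Finset.card_image_le.trans (Finset.card_range _).le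

lemma exists_bracket {t Δ τ : ℕ} (hΔ : 0 < Δ) (hτ : τ ≤ t) :
    ∃ lo ∈ checkpoints t Δ, ∃ hi ∈ checkpoints t Δ, lo ≤ τ ∧ τ ≤ hi ∧ hi ≤ lo + Δ := by
  have hk : τ / Δ ≤ t / Δ := Nat.div_le_div_right hτ
  have hlo : τ / Δ * Δ ≤ τ := Nat.div_mul_le_self τ Δ
  have hhi : τ < (τ / Δ + 1) * Δ := by
    rw [add_mul, one_mul]; exact Nat.lt_div_mul_add hΔ
  refine ⟨min (τ / Δ * Δ) t, Finset.mem_image_of_mem _ (Finset.mem_range.mpr (by omega)),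
    min ((τ / Δ + 1) * Δ) t, Finset.mem_image_of_mem _ (Finset.mem_range.mpr (by omega)),
    ?_, ?_, ?_⟩
  · omega
  · omega
  · rw [add_mul, one_mul]; omega

end checkpoints

lemma abs_sub_le_two_mul_of_checkpoints {S M : ℕ → ℝ} (hS : Monotone S)
    {t Δ : ℕ} (hΔ : 0 < Δ) {a : ℝ} (hMΔ : ∀ τ τ', τ ≤ τ' → τ' ≤ τ + Δ → M τ' - M τ ≤ a)
    (hgrid : ∀ g ∈ checkpoints t Δ, |S g - M g| ≤ a) {τ : ℕ} (hτ : τ ≤ t) :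
    |S τ - M τ| ≤ 2 * a := by
  obtain ⟨lo, hlo, hi, hhi, hloτ, hτhi, hhilo⟩ := checkpoints.exists_bracket hΔ hτ
  have hMlo := hMΔ lo τ hloτ (by omega)
  have hMhi := hMΔ τ hi hτhi (by omega)
  have hSlo := hS hloτ
  have hShi := hS hτhi
  have hlo' := abs_le.mp (hgrid lo hlo)
  have hhi' := abs_le.mp (hgrid hi hhi)
  rw [abs_le]
  constructor <;> linarith

lemma abs_sum_sub_le_two_mul_of_checkpoints {x m : ℕ → ℝ} {b a : ℝ} {t Δ τ : ℕ}
    (hx : ∀ i, 0 ≤ x i) (hm : ∀ i, m i ≤ b) (hb : 0 ≤ b) (hΔ : 0 < Δ) (ha : Δ * b ≤ a)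
    (hgrid : ∀ g ∈ checkpoints t Δ, |∑ i ∈ Finset.Icc 1 g, (x i - m i)| ≤ a) (hτ : τ ≤ t) :
    |∑ i ∈ Finset.Icc 1 τ, (x i - m i)| ≤ 2 * a := by
  have hmono : Monotone fun τ => ∑ i ∈ Finset.Icc 1 τ, x i := fun τ τ' h =>
    Finset.sum_le_sum_of_subset_of_nonneg (Finset.Icc_subset_Icc_right h) fun i _ _ => hx i
  have hstep : ∀ τ τ', τ ≤ τ' → τ' ≤ τ + Δ →
      ∑ i ∈ Finset.Icc 1 τ', m i - ∑ i ∈ Finset.Icc 1 τ, m i ≤ a := fun τ τ' h h' =>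
    (sum_Icc_one_sub_sum_Icc_one_le hm h).trans (le_trans (by gcongr; omega) ha)
  simp only [Finset.sum_sub_distrib] at hgrid ⊢
  exact abs_sub_le_two_mul_of_checkpoints hmono hΔ hstep hgrid hτ

lemma natCast_div_floor_div_le {t : ℕ} {y : ℝ} (hy : 0 < y) (hyt : 2 * y ≤ t) :
    ((t / ⌊t / y⌋₊ : ℕ) : ℝ) ≤ 2 * y := by
  have ht : (0 : ℝ) < t := by linarith
  have hx : 2 ≤ t / y := by rw [le_div_iff₀ hy]; linarith
  have hΔ : t / y / 2 ≤ ⌊t / y⌋₊ := by linarith [Nat.lt_floor_add_one (t / y)]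
  have hΔ0 : (0 : ℝ) < t / y / 2 := by positivity
  calc ((t / ⌊t / y⌋₊ : ℕ) : ℝ) ≤ t / ⌊t / y⌋₊ := Nat.cast_div_le
    _ ≤ t / (t / y / 2) := by gcongr
    _ = 2 * y := by field_simp [ht.ne']

lemma neg_div_add_div_le_of_le_two_mul {t r w N : ℝ} (ht : 0 < t) (hr : 2 ≤ r) (hw : 0 < w)
    (hN : 0 < N) (hNt : N ≤ 2 * t * w) : -(t * r ^ 2 / 2) / N + t / N ≤ -(r ^ 2 / (8 * w)) := by
  have hr2 : 4 * t ≤ t * r ^ 2 := by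
    rw [mul_comm]; gcongr; nlinarith
  have hX : -(r ^ 2 / (8 * w)) * (2 * t * w) = -(t * r ^ 2 / 4) := by
    field_simp; ring
  have hXN := mul_le_mul_of_nonpos_left hNt
    (neg_nonpos.mpr (by positivity) : -(r ^ 2 / (8 * w)) ≤ 0)
  rw [← add_div, div_le_iff₀ hN]
  linarith

section truncpt

variable {t : ℕ}

lemma one_lt_log_natCast_of_one_le_log_log (hw : 1 ≤ log (log t)) : 1 < log t := by
  by_contra h
  linarith [log_nonpos (log_natCast_nonneg t) (not_lt.mp h)]

lemma one_le_natCast_of_one_le_log_log (hw : 1 ≤ log (log t)) : (1 : ℝ) ≤ t := by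
  by_contra h
  linarith [one_lt_log_natCast_of_one_le_log_log hw,
    log_nonpos (Nat.cast_nonneg t) (not_le.mp h).le]

lemma one_lt_truncpt (hw : 1 ≤ log (log t)) : 1 < truncpt t := by
  have := one_le_natCast_of_one_le_log_log hw
  unfold truncpt
  nlinarith

lemma truncpt_le_two_mul (hw : 1 ≤ log (log t)) : truncpt t ≤ 2 * t * log (log t) := by
  have := one_le_natCast_of_one_le_log_log hw
  unfold truncpt
  nlinarith

lemma truncpt_le_sq (hw : 1 ≤ log (log t)) : truncpt t ≤ t ^ 2 := by
  have ht := one_le_natCast_of_one_le_log_log hw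
  have hℓ := one_lt_log_natCast_of_one_le_log_log hw
  have hw' : log (log t) ≤ t - 2 := by
    linarith [log_le_sub_one_of_pos (by linarith : 0 < log t),
      log_le_sub_one_of_pos (by linarith : (0 : ℝ) < t)]
  unfold truncpt
  nlinarith

end truncpt

lemma tendsto_pow_mul_exp_neg_sq_div_log_atTop (p : ℕ) {c : ℝ} (hc : 0 < c) :
    Tendsto (fun x => x ^ p * exp (-(c * x ^ 2 / log x))) atTop (𝓝 0) := by
  refine squeeze_zero' ((eventually_ge_atTop 0).mono fun x hx => by positivity) ?_
    tendsto_inv_atTop_zero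
  filter_upwards [eventually_ge_atTop (4 * (p + 1) / c), eventually_gt_atTop 1] with x hxc hx1
  have hx0 : 0 < x := by linarith
  have hlog : 0 < log x := log_pos hx1
  have hsq : log x ^ 2 ≤ 4 * x := by
    have h := log_le_rpow_div hx0.le (by norm_num : (0 : ℝ) < 1 / 2)
    have hs : (x ^ (1 / 2 : ℝ)) ^ 2 = x := by
      rw [← rpow_natCast, ← rpow_mul hx0.le]; norm_num
    nlinarith [rpow_nonneg hx0.le (1 / 2 : ℝ)]
  have hkey : (p + 1) * log x ^ 2 ≤ c * x ^ 2 := by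
    have : 4 * (p + 1) ≤ c * x := by rw [div_le_iff₀ hc] at hxc; linarith
    nlinarith
  have hexp : p * log x - c * x ^ 2 / log x ≤ -log x := by
    have : c * x ^ 2 / log x ≥ (p + 1) * log x := by rw [ge_iff_le, le_div_iff₀ hlog]; nlinarith
    linarith
  calc x ^ p * exp (-(c * x ^ 2 / log x)) = exp (p * log x - c * x ^ 2 / log x) := by
        rw [sub_eq_add_neg, exp_add, exp_nat_mul, exp_log hx0]
    _ ≤ exp (-log x) := exp_le_exp.mpr hexp
    _ = x⁻¹ := by rw [exp_neg, exp_log hx0]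

lemma eventually_mul_log_natCast_le (c : ℝ) : ∀ᶠ t : ℕ in atTop, c * log t ≤ t := by
  refine (tendsto_natCast_atTop_atTop (R := ℝ)).eventually (p := fun x => c * log x ≤ x) ?_
  filter_upwards [isLittleO_log_id_atTop.bound (inv_pos.mpr (by positivity : 0 < |c| + 1)),
    eventually_ge_atTop 0] with x hx hx0
  rw [norm_eq_abs, norm_eq_abs, id, abs_of_nonneg hx0] at hx
  calc c * log x ≤ |c| * |log x| := by rw [← abs_mul]; exact le_abs_self _
    _ ≤ (|c| + 1) * ((|c| + 1)⁻¹ * x) := by gcongr; linarith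
    _ = x := by field_simp

section Probability

variable {Ω : Type*} [MeasurableSpace Ω] {μ : Measure Ω} [IsProbabilityMeasure μ]

lemma one_sub_measureReal_le_measureReal_compl (s : Set Ω) : 1 - μ.real s ≤ μ.real sᶜ := by
  have h := measureReal_union_le (μ := μ) s sᶜ
  rw [Set.union_compl_self, probReal_univ] at h
  linarith

lemma integrable_exp_mul_of_abs_le {X : Ω → ℝ} {c : ℝ} (hXm : Measurable X)
    (hXc : ∀ ω, |X ω| ≤ c) (s : ℝ) : Integrable (fun ω => exp (s * X ω)) μ :=
  .of_bound (hXm.const_mul s).exp.aestronglyMeasurable (exp (|s| * c)) <| ae_of_all _ fun ω => by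
    rw [norm_of_nonneg (exp_pos _).le, exp_le_exp]
    exact (le_abs_self _).trans (by rw [abs_mul]; gcongr; exact hXc ω)

lemma mgf_le_exp_sq_mul_integral_sq {Y : Ω → ℝ} {c s : ℝ} (hYm : Measurable Y)
    (hY0 : ∫ ω, Y ω ∂μ = 0) (hYc : ∀ ω, |Y ω| ≤ c) (hsc : |s| * c ≤ 1) :
    mgf Y μ s ≤ exp (s ^ 2 * ∫ ω, Y ω ^ 2 ∂μ) := by
  have hint : Integrable Y μ := .of_bound hYm.aestronglyMeasurable c (ae_of_all _ hYc)
  have hint2 : Integrable (fun ω => Y ω ^ 2) μ :=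
    .of_bound (hYm.pow_const 2).aestronglyMeasurable (c ^ 2) (ae_of_all _ fun ω => by
      simpa [sq_abs] using pow_le_pow_left₀ (abs_nonneg _) (hYc ω) 2)
  have hlin : Integrable (fun ω => 1 + s * Y ω) μ := (integrable_const 1).add (hint.const_mul s)
  have hpt : ∀ ω, exp (s * Y ω) ≤ 1 + s * Y ω + s ^ 2 * Y ω ^ 2 := fun ω => by
    have h := exp_le_one_add_add_sq (x := s * Y ω) (by
      rw [abs_mul]; exact (mul_le_mul_of_nonneg_left (hYc ω) (abs_nonneg s)).trans hsc)
    rwa [mul_pow] at h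
  calc mgf Y μ s ≤ ∫ ω, (1 + s * Y ω + s ^ 2 * Y ω ^ 2) ∂μ :=
        integral_mono (integrable_exp_mul_of_abs_le hYm hYc s) (hlin.add (hint2.const_mul _)) hpt
    _ = 1 + s ^ 2 * ∫ ω, Y ω ^ 2 ∂μ := by
        rw [integral_add hlin (hint2.const_mul _), integral_add (integrable_const 1)
          (hint.const_mul s), integral_const_mul, integral_const_mul, hY0]
        simp
    _ ≤ exp (s ^ 2 * ∫ ω, Y ω ^ 2 ∂μ) := by linarith [add_one_le_exp (s ^ 2 * ∫ ω, Y ω ^ 2 ∂μ)]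

section Independent

variable {ι : Type*} {Y : ι → Ω → ℝ} {c v : ℝ}

lemma measureReal_sum_ge_le (hY : iIndepFun Y μ) (hYm : ∀ i, Measurable (Y i))
    (hY0 : ∀ i, ∫ ω, Y i ω ∂μ = 0) (hYc : ∀ i ω, |Y i ω| ≤ c)
    (hYv : ∀ i, ∫ ω, Y i ω ^ 2 ∂μ ≤ v) (hc : 0 < c) (S : Finset ι) (a : ℝ) :
    μ.real {ω | a ≤ ∑ i ∈ S, Y i ω} ≤ exp (-a / c + S.card * v / c ^ 2) := by
  have hSc : ∀ ω, |∑ i ∈ S, Y i ω| ≤ S.card * c := fun ω =>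
    (Finset.abs_sum_le_sum_abs _ _).trans (by simpa using Finset.sum_le_sum fun i _ => hYc i ω)
  have hmgf : mgf (fun ω => ∑ i ∈ S, Y i ω) μ c⁻¹ ≤ exp (S.card * v / c ^ 2) := by
    have hsum : (fun ω => ∑ i ∈ S, Y i ω) = ∑ i ∈ S, Y i := by ext; simp
    rw [hsum]
    calc mgf (∑ i ∈ S, Y i) μ c⁻¹ = ∏ i ∈ S, mgf (Y i) μ c⁻¹ := hY.mgf_sum hYm S
      _ ≤ ∏ _i ∈ S, exp (c⁻¹ ^ 2 * v) := Finset.prod_le_prod (fun i _ => mgf_nonneg) fun i _ =>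
          (mgf_le_exp_sq_mul_integral_sq (hYm i) (hY0 i) (hYc i)
            (by rw [abs_inv, abs_of_pos hc, inv_mul_cancel₀ hc.ne'])).trans (by gcongr; exact hYv i)
      _ = exp (S.card * v / c ^ 2) := by
          rw [Finset.prod_const, ← exp_nat_mul]; ring_nf
  calc μ.real {ω | a ≤ ∑ i ∈ S, Y i ω}
      ≤ exp (-c⁻¹ * a) * mgf (fun ω => ∑ i ∈ S, Y i ω) μ c⁻¹ :=
        measure_ge_le_exp_mul_mgf a (inv_nonneg.mpr hc.le) (integrable_exp_mul_of_abs_le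
          (Finset.measurable_sum _ fun i _ => hYm i) hSc _)
    _ ≤ exp (-c⁻¹ * a) * exp (S.card * v / c ^ 2) := by gcongr
    _ = exp (-a / c + S.card * v / c ^ 2) := by rw [← exp_add]; ring_nf

lemma measureReal_abs_sum_ge_le (hY : iIndepFun Y μ) (hYm : ∀ i, Measurable (Y i))
    (hY0 : ∀ i, ∫ ω, Y i ω ∂μ = 0) (hYc : ∀ i ω, |Y i ω| ≤ c)
    (hYv : ∀ i, ∫ ω, Y i ω ^ 2 ∂μ ≤ v) (hc : 0 < c) (S : Finset ι) (a : ℝ) :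
    μ.real {ω | a ≤ |∑ i ∈ S, Y i ω|} ≤ 2 * exp (-a / c + S.card * v / c ^ 2) := by
  have hupper := measureReal_sum_ge_le hY hYm hY0 hYc hYv hc S a
  have hlower := measureReal_sum_ge_le (Y := fun i ω => -Y i ω)
    (hY.comp (fun _ => Neg.neg) fun _ => measurable_neg) (fun i => (hYm i).neg)
    (fun i => by rw [integral_neg, hY0, neg_zero]) (fun i ω => by rw [abs_neg]; exact hYc i ω)
    (fun i => by simpa only [neg_sq] using hYv i) hc S a
  have hsplit : {ω | a ≤ |∑ i ∈ S, Y i ω|} ⊆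
      {ω | a ≤ ∑ i ∈ S, Y i ω} ∪ {ω | a ≤ ∑ i ∈ S, -Y i ω} := fun ω hω => by
    simp only [Set.mem_union, Set.mem_ofPred_eq, Finset.sum_neg_distrib] at hω ⊢
    rcases le_abs'.mp hω with h | h
    · exact .inr (by linarith)
    · exact .inl h
  calc μ.real {ω | a ≤ |∑ i ∈ S, Y i ω|} ≤ _ := measureReal_mono hsplit
    _ ≤ _ := measureReal_union_le _ _
    _ ≤ _ := add_le_add hupper hlower
    _ = _ := by ring

end Independent

lemma abs_sub_integral_le {X : Ω → ℝ} {c : ℝ} (hXm : Measurable X) (hX : ∀ ω, 0 ≤ X ω ∧ X ω ≤ c)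
    (ω : Ω) : |X ω - ∫ ω', X ω' ∂μ| ≤ c := by
  have hint : Integrable X μ := .of_bound hXm.aestronglyMeasurable c <| ae_of_all _ fun ω => by
    rw [norm_of_nonneg (hX ω).1]; exact (hX ω).2
  have h0 : 0 ≤ ∫ ω', X ω' ∂μ := integral_nonneg fun ω' => (hX ω').1
  have hc : ∫ ω', X ω' ∂μ ≤ c := by
    simpa using integral_mono hint (integrable_const c) fun ω' => (hX ω').2
  rw [abs_sub_le_iff]
  constructor <;> linarith [hX ω]

section NatValued

variable {W : Ω → ℕ} {N : ℕ}

lemma integrable_natCast_of_le (hWm : Measurable W) (hWN : ∀ ω, W ω ≤ N) :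
    Integrable (fun ω => (W ω : ℝ)) μ :=
  .of_bound (measurable_from_top.comp hWm).aestronglyMeasurable N
    (ae_of_all _ fun ω => by simpa using hWN ω)

lemma integral_comp_eq_sum_range (hWm : Measurable W) (hWN : ∀ ω, W ω ≤ N) (g : ℕ → ℝ) :
    ∫ ω, g (W ω) ∂μ = ∑ k ∈ Finset.range (N + 1), g k * μ.real {ω | W ω = k} := by
  have hmeas : ∀ k, MeasurableSet {ω | W ω = k} := fun k => hWm (measurableSet_singleton k)
  have hpt : ∀ ω, g (W ω) =
      ∑ k ∈ Finset.range (N + 1), {ω | W ω = k}.indicator (fun _ => g k) ω := fun ω => by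
    rw [Finset.sum_eq_single_of_mem (W ω) (Finset.mem_range_succ_iff.mpr (hWN ω))]
    · simp
    · intro k _ hk
      exact Set.indicator_of_notMem (Ne.symm hk) _
  simp_rw [hpt]
  rw [integral_finsetSum _ fun k _ => (integrable_const (g k)).indicator (hmeas k)]
  exact Finset.sum_congr rfl fun k _ => by
    rw [integral_indicator_const _ (hmeas k), smul_eq_mul, mul_comm]

lemma integral_sq_le_of_sq_mul_measureReal_le (hWm : Measurable W) (hWN : ∀ ω, W ω ≤ N)
    (hW : ∀ k : ℕ, (k : ℝ) ^ 2 * μ.real {ω | W ω = k} ≤ 1) :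
    ∫ ω, (W ω : ℝ) ^ 2 ∂μ ≤ N := by
  rw [integral_comp_eq_sum_range hWm hWN (fun k => (k : ℝ) ^ 2), Finset.sum_range_succ']
  simpa using Finset.sum_le_card_nsmul (Finset.range N) _ 1 fun k _ => hW (k + 1)

lemma integral_le_one_add_log_of_sq_mul_measureReal_le (hWm : Measurable W)
    (hWN : ∀ ω, W ω ≤ N) (hW : ∀ k : ℕ, (k : ℝ) ^ 2 * μ.real {ω | W ω = k} ≤ 1) :
    ∫ ω, (W ω : ℝ) ∂μ ≤ 1 + log N := by
  rw [integral_comp_eq_sum_range hWm hWN (fun k => (k : ℝ)), Finset.sum_range_succ']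
  calc ∑ k ∈ Finset.range N, ((k + 1 : ℕ) : ℝ) * μ.real {ω | W ω = k + 1} + _
      ≤ ∑ k ∈ Finset.range N, ((k + 1 : ℕ) : ℝ)⁻¹ := by
        rw [Nat.cast_zero, zero_mul, add_zero]
        refine Finset.sum_le_sum fun k _ => ?_
        have hk : ((k + 1 : ℕ) : ℝ) ≠ 0 := by positivity
        calc ((k + 1 : ℕ) : ℝ) * μ.real {ω | W ω = k + 1}
            = ((k + 1 : ℕ) : ℝ)⁻¹ * (((k + 1 : ℕ) : ℝ) ^ 2 * μ.real {ω | W ω = k + 1}) := by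
              field_simp
          _ ≤ ((k + 1 : ℕ) : ℝ)⁻¹ * 1 := by gcongr; exact hW (k + 1)
          _ = _ := mul_one _
    _ = harmonic N := by simp [harmonic]
    _ ≤ 1 + log N := harmonic_le_one_add_log N

lemma integral_sub_integral_sq_le_of_sq_mul_measureReal_le (hWm : Measurable W)
    (hWN : ∀ ω, W ω ≤ N) (hW : ∀ k : ℕ, (k : ℝ) ^ 2 * μ.real {ω | W ω = k} ≤ 1) :
    ∫ ω, ((W ω : ℝ) - ∫ ω', (W ω' : ℝ) ∂μ) ^ 2 ∂μ ≤ N := by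
  have hWm' : Measurable fun ω => (W ω : ℝ) := measurable_from_top.comp hWm
  rw [← variance_eq_integral hWm'.aemeasurable]
  exact (variance_le_expectation_sq hWm'.aestronglyMeasurable).trans
    (integral_sq_le_of_sq_mul_measureReal_le hWm hWN hW)

lemma sq_mul_measureReal_le_one_of_inverse_square {T b : ℝ} (hWT : ∀ ω, (W ω : ℝ) < T)
    (hW : ∀ k : ℕ, 1 ≤ k → (k : ℝ) < T → μ {ω | W ω = k} = ENNReal.ofReal (b / k ^ 2))
    (k : ℕ) : (k : ℝ) ^ 2 * μ.real {ω | W ω = k} ≤ 1 := by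
  rcases Nat.eq_zero_or_pos k with rfl | hk
  · simp
  by_cases hkT : (k : ℝ) < T
  · have hb : b ≤ 1 := by
      have h := hW 1 le_rfl (lt_of_le_of_lt (by exact_mod_cast hk) hkT)
      rw [Nat.cast_one, one_pow, div_one] at h
      exact ENNReal.ofReal_le_one.mp (h ▸ prob_le_one)
    have hk2 : (0 : ℝ) < (k : ℝ) ^ 2 := by positivity
    rw [← le_div_iff₀' hk2]
    refine ENNReal.toReal_le_of_le_ofReal (by positivity) ((hW k hk hkT).trans_le ?_)
    exact ENNReal.ofReal_le_ofReal (by gcongr)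
  · have hempty : {ω | W ω = k} = ∅ :=
      Set.eq_empty_of_forall_notMem fun ω hω => hkT (hω.symm ▸ hWT ω)
    simp [hempty]

end NatValued

lemma measureReal_abs_sum_sub_integral_ge_le {ι : Type*} {V : ι → Ω → ℕ} {N : ℕ}
    (hV : iIndepFun V μ) (hVm : ∀ i, Measurable (V i)) (hVN : ∀ i ω, V i ω ≤ N)
    (hVk : ∀ i (k : ℕ), (k : ℝ) ^ 2 * μ.real {ω | V i ω = k} ≤ 1) (hN : 0 < N)
    (S : Finset ι) (a : ℝ) :
    μ.real {ω | a ≤ |∑ i ∈ S, ((V i ω : ℝ) - ∫ ω', (V i ω' : ℝ) ∂μ)|} ≤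
      2 * exp (-a / N + S.card / N) := by
  set Y : ι → Ω → ℝ := fun i ω => (V i ω : ℝ) - ∫ ω', (V i ω' : ℝ) ∂μ
  have hVm' : ∀ i, Measurable fun ω => (V i ω : ℝ) := fun i => measurable_from_top.comp (hVm i)
  have hY : iIndepFun Y μ :=
    hV.comp (fun i (x : ℕ) => (x : ℝ) - ∫ ω', (V i ω' : ℝ) ∂μ) fun i => by fun_prop
  have hY0 : ∀ i, ∫ ω, Y i ω ∂μ = 0 := fun i => by
    simp [Y, integral_sub (integrable_natCast_of_le (hVm i) (hVN i)) (integrable_const _)]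
  have hYN : ∀ i ω, |Y i ω| ≤ N := fun i ω =>
    abs_sub_integral_le (hVm' i) (fun ω => ⟨by positivity, by exact_mod_cast hVN i ω⟩) ω
  have hYv : ∀ i, ∫ ω, Y i ω ^ 2 ∂μ ≤ N := fun i =>
    integral_sub_integral_sq_le_of_sq_mul_measureReal_le (hVm i) (hVN i) (hVk i)
  have hN' : (N : ℝ) ≠ 0 := by positivity
  calc _ ≤ 2 * exp (-a / N + S.card * N / N ^ 2) :=
        measureReal_abs_sum_ge_le hY (fun i => (hVm' i).sub_const _) hY0 hYN hYv
          (by positivity) S a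
    _ = 2 * exp (-a / N + S.card / N) := by rw [sq, ← div_div, mul_div_cancel_right₀ _ hN']

lemma measureReal_compl_partialSums_le {V : ℕ → Ω → ℕ} {N : ℕ} (hV : iIndepFun V μ)
    (hVm : ∀ i, Measurable (V i)) (hVN : ∀ i ω, V i ω ≤ N)
    (hVk : ∀ i (k : ℕ), (k : ℝ) ^ 2 * μ.real {ω | V i ω = k} ≤ 1)
    (hN : 0 < N) (t : ℕ) {Δ : ℕ} (hΔ : 0 < Δ) {a : ℝ} (ha : Δ * (1 + log N) ≤ a) :
    μ.real {ω | ∀ τ ∈ Finset.Icc 1 t, |∑ i ∈ Finset.Icc 1 τ, (V i ω : ℝ) -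
        ∫ ω', ∑ i ∈ Finset.Icc 1 τ, (V i ω' : ℝ) ∂μ| ≤ 2 * a}ᶜ ≤
      (t / Δ + 2 : ℕ) * (2 * exp (-a / N + t / N)) := by
  set m : ℕ → ℝ := fun i => ∫ ω, (V i ω : ℝ) ∂μ
  have hdev : ∀ τ ω, ∑ i ∈ Finset.Icc 1 τ, (V i ω : ℝ) -
      ∫ ω', ∑ i ∈ Finset.Icc 1 τ, (V i ω' : ℝ) ∂μ = ∑ i ∈ Finset.Icc 1 τ, ((V i ω : ℝ) - m i) :=
    fun τ ω => by
      rw [integral_finsetSum _ fun i _ => integrable_natCast_of_le (hVm i) (hVN i),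
        ← Finset.sum_sub_distrib]
  have hsub : {ω | ∀ τ ∈ Finset.Icc 1 t, |∑ i ∈ Finset.Icc 1 τ, (V i ω : ℝ) -
        ∫ ω', ∑ i ∈ Finset.Icc 1 τ, (V i ω' : ℝ) ∂μ| ≤ 2 * a}ᶜ ⊆
      ⋃ g ∈ checkpoints t Δ, {ω | a ≤ |∑ i ∈ Finset.Icc 1 g, ((V i ω : ℝ) - m i)|} := by
    intro ω hω
    by_contra hgrid
    simp only [Set.mem_iUnion, Set.mem_ofPred_eq, not_exists, not_le] at hgrid
    refine hω fun τ hτ => ?_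
    rw [hdev]
    exact abs_sum_sub_le_two_mul_of_checkpoints (fun i => Nat.cast_nonneg (V i ω))
      (fun i => integral_le_one_add_log_of_sq_mul_measureReal_le (hVm i) (hVN i) (hVk i))
      (by linarith [log_nonneg (Nat.one_le_cast.mpr hN)]) hΔ ha (fun g hg => (hgrid g hg).le)
      (Finset.mem_Icc.mp hτ).2
  calc _ ≤ ∑ g ∈ checkpoints t Δ,
        μ.real {ω | a ≤ |∑ i ∈ Finset.Icc 1 g, ((V i ω : ℝ) - m i)|} :=
        (measureReal_mono hsub (measure_ne_top _ _)).trans (measureReal_biUnion_finset_le _ _)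
    _ ≤ ∑ g ∈ checkpoints t Δ, 2 * exp (-a / N + t / N) := by
        refine Finset.sum_le_sum fun g hg => ?_
        refine (measureReal_abs_sum_sub_integral_ge_le hV hVm hVN hVk hN _ a).trans ?_
        rw [Nat.card_Icc, add_tsub_cancel_right]
        gcongr
        exact_mod_cast checkpoints.le_of_mem hg
    _ ≤ _ := by
        rw [Finset.sum_const, nsmul_eq_mul]
        gcongr
        exact_mod_cast checkpoints.card_le t Δ

lemma log_sq_mul_measureReal_compl_le {V : ℕ → Ω → ℕ} {t : ℕ} {r : ℝ} (hV : iIndepFun V μ)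
    (hVm : ∀ i, Measurable (V i)) (hVT : ∀ i ω, (V i ω : ℝ) < truncpt t)
    (hVk : ∀ i (k : ℕ), (k : ℝ) ^ 2 * μ.real {ω | V i ω = k} ≤ 1)
    (hr : 2 ≤ r) (hrt : 12 * r ≤ t) (hℓ : log t = r ^ 3) :
    log t ^ 2 * μ.real {ω | ∀ τ ∈ Finset.Icc 1 t, |∑ i ∈ Finset.Icc 1 τ, (V i ω : ℝ) -
        ∫ ω', ∑ i ∈ Finset.Icc 1 τ, (V i ω' : ℝ) ∂μ| ≤ t * r ^ 2}ᶜ ≤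
      26 * (r ^ 7 * exp (-(24⁻¹ * r ^ 2 / log r))) := by
  have hlogr : 0 < log r := log_pos (by linarith)
  have hw : log (log t) = 3 * log r := by rw [hℓ, log_pow]; norm_num
  have hw1 : 1 ≤ log (log t) := by
    rw [hw]; linarith [log_two_gt_d9, log_le_log (by norm_num) hr]
  have ht : (0 : ℝ) < t := by nlinarith
  set N := ⌊truncpt t⌋₊
  have hT1 := one_lt_truncpt hw1
  have hN0 : 0 < N := Nat.floor_pos.mpr hT1.le
  have hN : (0 : ℝ) < N := by exact_mod_cast hN0
  have hNT : (N : ℝ) ≤ truncpt t := Nat.floor_le (by linarith)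
  have hlogN : 1 + log N ≤ 3 * r ^ 3 := by
    have : log N ≤ 2 * r ^ 3 := by
      calc log N ≤ log ((t : ℝ) ^ 2) := log_le_log hN (hNT.trans (truncpt_le_sq hw1))
        _ = 2 * r ^ 3 := by rw [log_pow, hℓ]; norm_num
    nlinarith [one_le_pow₀ (n := 3) (by linarith : (1 : ℝ) ≤ r)]
  set Δ := ⌊t / (6 * r)⌋₊
  have hΔ0 : 0 < Δ := Nat.floor_pos.mpr (by rw [le_div_iff₀ (by positivity)]; linarith)
  have hΔa : Δ * (1 + log N) ≤ t * r ^ 2 / 2 := by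
    have hΔ : (Δ : ℝ) ≤ t / (6 * r) := Nat.floor_le (by positivity)
    calc Δ * (1 + log N) ≤ t / (6 * r) * (3 * r ^ 3) := by
          gcongr
      _ = t * r ^ 2 / 2 := by field_simp; ring
  have hcount : ((t / Δ + 2 : ℕ) : ℝ) ≤ 13 * r := by
    have := natCast_div_floor_div_le (t := t) (y := 6 * r) (by positivity) (by linarith)
    push_cast at this ⊢
    linarith
  have hexp : -(t * r ^ 2 / 2) / N + t / N ≤ -(24⁻¹ * r ^ 2 / log r) := by
    have hNt : (N : ℝ) ≤ 2 * t * (3 * log r) := hw ▸ hNT.trans (truncpt_le_two_mul hw1)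
    convert neg_div_add_div_le_of_le_two_mul ht hr (by positivity) hN hNt using 1
    ring
  rw [show (t : ℝ) * r ^ 2 = 2 * (t * r ^ 2 / 2) by ring]
  calc log t ^ 2 * μ.real _
        ≤ log t ^ 2 * ((t / Δ + 2 : ℕ) * (2 * exp (-(t * r ^ 2 / 2) / N + t / N))) := by
        gcongr
        exact measureReal_compl_partialSums_le hV hVm (fun i ω => Nat.le_floor (hVT i ω).le) hVk
          hN0 t hΔ0 hΔa
    _ ≤ (r ^ 3) ^ 2 * (13 * r * (2 * exp (-(24⁻¹ * r ^ 2 / log r)))) := by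
        rw [hℓ]; gcongr
    _ = 26 * (r ^ 7 * exp (-(24⁻¹ * r ^ 2 / log r))) := by ring

end Probability

theorem edge_count_concentration
    {Ω : Type*} [MeasurableSpace Ω] (μ : Measure Ω) [IsProbabilityMeasure μ]
    (Z : ℕ → ℕ → Ω → ℕ) (hmeas : ∀ t i, Measurable (Z t i))
    (hsupp : ∀ t : ℕ, 3 ≤ t → ∀ i ω, 1 ≤ Z t i ω ∧ (Z t i ω : ℝ) < truncpt t)
    (hdist : ∀ t : ℕ, 3 ≤ t → ∀ i_0 : ℕ, ∀ i : ℕ, 1 ≤ i → (i : ℝ) < truncpt t →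
      μ {ω | Z t i_0 ω = i} = ENNReal.ofReal (betapp t / (i : ℝ) ^ 2))
    (hindep : ∀ t : ℕ, 3 ≤ t → iIndepFun (Z t) μ)
    (C : ℕ → Set Ω)
    (hC : ∀ t : ℕ, C t = {ω | ∀ τ ∈ Finset.Icc 1 t,
      |(∑ i ∈ Finset.Icc 1 τ, (Z t i ω : ℝ)) -
        ∫ ω', ∑ i ∈ Finset.Icc 1 τ, (Z t i ω' : ℝ) ∂μ| ≤
        (t : ℝ) * (Real.log (t : ℝ)) ^ ((2 : ℝ) / 3)}) :
    Tendsto (fun t : ℕ => (Real.log (t : ℝ)) ^ 2 * (1 - (μ (C t)).toReal))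
      atTop (nhds 0) := by
  have hr : Tendsto (fun t : ℕ => log t ^ (3⁻¹ : ℝ)) atTop atTop :=
    (tendsto_rpow_atTop (by norm_num)).comp (tendsto_log_atTop.comp tendsto_natCast_atTop_atTop)
  have hlim := ((tendsto_pow_mul_exp_neg_sq_div_log_atTop 7 (by norm_num : (0 : ℝ) < 24⁻¹)).comp
    hr).const_mul 26
  rw [mul_zero] at hlim
  refine squeeze_zero' (.of_forall fun t => mul_nonneg (sq_nonneg _) (sub_nonneg.mpr
    measureReal_le_one)) ?_ hlim
  filter_upwards [eventually_ge_atTop 3, hr.eventually_ge_atTop 2,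
    eventually_mul_log_natCast_le 12] with t ht3 hr2 hlogt
  set r := log t ^ (3⁻¹ : ℝ)
  have hℓ : log t = r ^ 3 := by
    simpa using (rpow_inv_natCast_pow (log_natCast_nonneg t) three_ne_zero).symm
  have h23 : log t ^ ((2 : ℝ) / 3) = r ^ 2 := by
    rw [← rpow_natCast, ← rpow_mul (log_natCast_nonneg t)]; norm_num
  calc log t ^ 2 * (1 - μ.real (C t)) ≤ log t ^ 2 * μ.real (C t)ᶜ := by
        gcongr; exact one_sub_measureReal_le_measureReal_compl _
    _ ≤ 26 * (r ^ 7 * exp (-(24⁻¹ * r ^ 2 / log r))) := by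
        rw [hC t, h23]
        exact log_sq_mul_measureReal_compl_le (hindep t ht3) (hmeas t)
          (fun i ω => (hsupp t ht3 i ω).2)
          (fun i => sq_mul_measureReal_le_one_of_inverse_square (fun ω => (hsupp t ht3 i ω).2)
            (hdist t ht3 i)) hr2 (by nlinarith) hℓ
end

section
/- Set t₀ = t / log log t, let Z₁, …, Z_t be i.i.d. copies of Z(t), and L(τ) = ∑_{i=1}^τ Z_i. Then for every ε > 0 there exists T such that for all t ≥ T and all integers s with t₀ ≤ s ≤ t: (i) |E[L(τ)] − τ·β''·log t| ≤ ε·log^{−1/4}t · τ·β''·log t for every t₀ ≤ τ ≤ s; and (ii) on the event that |L(σ) − E[L(σ)]| ≤ t·log^{2/3} t for all 1 ≤ σ ≤ s, one has |L(τ) − τ·β''·log t| ≤ ε·log^{−1/4}t · τ·β''·log t for every t₀ ≤ τ ≤ s. -/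
open MeasureTheory ProbabilityTheory Real Filter

/-!
`Z(t)` has law `β'' / i²` on `{1, …, m}` with `m = ⌈t log log t⌉`. Hence `β'' ≥ 1/2`, because
`∑ 1/i² ≤ 2`, and `E Z = β'' H_m`, where the harmonic number satisfies
`H_m = log t + O(log log t) = log t + o(log^{3/4} t)`; this is (i). For (ii), `τ ≥ t / log log t`
and `β'' ≥ 1/2` bound the admitted deviation `t log^{2/3} t` by
`2 τ β'' log log t · log^{2/3} t = o(τ β'' log^{3/4} t)`, and the triangle inequality concludes.
-/

open Asymptotics

theorem natCast_lt_add_one_iff_le_ceil {x : ℝ} (hx : 0 ≤ x) {i : ℕ} :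
    (i : ℝ) < x + 1 ↔ i ≤ ⌈x⌉₊ := by
  constructor
  · intro h
    by_contra! hlt
    have : (⌈x⌉₊ : ℝ) + 1 ≤ i := by exact_mod_cast hlt
    linarith [Nat.le_ceil x]
  · intro h
    exact lt_of_le_of_lt (by exact_mod_cast h) (Nat.ceil_lt_add_one hx)

theorem sum_Icc_inv_sq_le_two (m : ℕ) : ∑ i ∈ Finset.Icc 1 m, ((i : ℝ) ^ 2)⁻¹ ≤ 2 := by
  have h := sum_Ioo_inv_sq_le (α := ℝ) 0 (m + 1)
  rwa [show Finset.Ioo 0 (m + 1) = Finset.Icc 1 m by ext; simp; omega, Nat.cast_zero, zero_add,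
    div_one] at h

theorem abs_harmonic_ceil_sub_log_le {x : ℝ} (hx : 1 ≤ x) :
    |(harmonic ⌈x⌉₊ : ℝ) - log x| ≤ 1 + log 2 := by
  have hceil : (⌈x⌉₊ : ℝ) < x + 1 := Nat.ceil_lt_add_one (by linarith)
  have hlower : log x ≤ harmonic ⌈x⌉₊ := calc
    log x ≤ log ((⌈x⌉₊ + 1 : ℕ) : ℝ) :=
      log_le_log (by linarith) (by push_cast; linarith [Nat.le_ceil x])
    _ ≤ harmonic ⌈x⌉₊ := log_add_one_le_harmonic _
  have hupper : (harmonic ⌈x⌉₊ : ℝ) ≤ 1 + log 2 + log x := calc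
    (harmonic ⌈x⌉₊ : ℝ) ≤ 1 + log ⌈x⌉₊ := harmonic_le_one_add_log _
    _ ≤ 1 + log (2 * x) := by
      gcongr 1 + ?_
      exact log_le_log (by exact_mod_cast Nat.ceil_pos.mpr (by linarith)) (by linarith)
    _ = 1 + log 2 + log x := by rw [log_mul two_ne_zero (by linarith), add_assoc]
  rw [abs_le]
  constructor <;> linarith [log_nonneg one_le_two]

theorem rpow_neg_one_div_four_mul_self {x : ℝ} (hx : 0 < x) :
    x ^ (-(1 : ℝ) / 4) * x = x ^ ((3 : ℝ) / 4) := by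
  rw [← rpow_add_one hx.ne']
  norm_num

theorem isLittleO_const_add_log_rpow_atTop (c : ℝ) {r : ℝ} (hr : 0 < r) :
    (fun u => c + log u) =o[atTop] fun u => u ^ r :=
  (isLittleO_const_left.mpr <| .inr <| tendsto_norm_atTop_atTop.comp (tendsto_rpow_atTop hr)).add
    (isLittleO_log_rpow_atTop hr)

theorem isLittleO_log_mul_rpow_atTop {r s : ℝ} (hrs : r < s) :
    (fun u => log u * u ^ r) =o[atTop] fun u => u ^ s := by
  refine ((isLittleO_log_rpow_atTop (sub_pos.mpr hrs)).mul_isBigO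
    (isBigO_refl (fun u : ℝ => u ^ r) atTop)).congr' .rfl ?_
  filter_upwards [eventually_gt_atTop 0] with u hu
  rw [← rpow_add hu, sub_add_cancel]

theorem integral_comp_eq_sum_measureReal {Ω α : Type*} [MeasurableSpace Ω] [MeasurableSpace α]
    [MeasurableSingletonClass α] {μ : Measure Ω} [IsFiniteMeasure μ] {W : Ω → α}
    (hW : Measurable W) {s : Finset α} (hs : ∀ ω, W ω ∈ s) (f : α → ℝ) :
    ∫ ω, f (W ω) ∂μ = ∑ i ∈ s, μ.real (W ⁻¹' {i}) * f i := by
  have hfiber : ∀ i ∈ s, MeasurableSet (W ⁻¹' {i}) := fun i _ => hW (measurableSet_singleton i)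
  have hconst : ∀ i ∈ s, Set.EqOn (fun ω => f (W ω)) (fun _ => f i) (W ⁻¹' {i}) :=
    fun i _ ω (hω : W ω = i) => congrArg f hω
  have hcover : ⋃ i ∈ s, W ⁻¹' {i} = Set.univ := by
    rw [Finset.set_biUnion_preimage_singleton]
    exact Set.eq_univ_of_forall hs
  calc ∫ ω, f (W ω) ∂μ = ∫ ω in ⋃ i ∈ s, W ⁻¹' {i}, f (W ω) ∂μ := by
        rw [hcover, setIntegral_univ]
    _ = ∑ i ∈ s, ∫ ω in W ⁻¹' {i}, f (W ω) ∂μ :=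
        integral_biUnion_finset s hfiber (Set.pairwiseDisjoint_fiber W s) fun i hi =>
          (integrableOn_const (C := f i)).congr_fun (hconst i hi).symm (hfiber i hi)
    _ = ∑ i ∈ s, μ.real (W ⁻¹' {i}) * f i := Finset.sum_congr rfl fun i hi => by
        rw [setIntegral_congr_fun (hfiber i hi) (hconst i hi), setIntegral_const, smul_eq_mul]

structure IsTruncatedInvSqLaw {Ω : Type*} [MeasurableSpace Ω] (μ : Measure Ω) (W : Ω → ℕ)
    (m : ℕ) (b : ℝ) : Prop where
  measurable : Measurable W
  mem_Icc : ∀ ω, W ω ∈ Finset.Icc 1 m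
  measure_eq : ∀ i ∈ Finset.Icc 1 m, μ (W ⁻¹' {i}) = ENNReal.ofReal (b / i ^ 2)

namespace IsTruncatedInvSqLaw

variable {Ω : Type*} [MeasurableSpace Ω] {μ : Measure Ω} {W : Ω → ℕ} {m : ℕ} {b : ℝ}

theorem of_lt_add_one {x : ℝ} (hx : 0 ≤ x) (hW : Measurable W)
    (hsupp : ∀ ω, 1 ≤ W ω ∧ (W ω : ℝ) < x + 1)
    (hlaw : ∀ i : ℕ, 1 ≤ i → (i : ℝ) < x + 1 → μ {ω | W ω = i} = ENNReal.ofReal (b / i ^ 2)) :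
    IsTruncatedInvSqLaw μ W ⌈x⌉₊ b where
  measurable := hW
  mem_Icc ω := Finset.mem_Icc.mpr
    ⟨(hsupp ω).1, (natCast_lt_add_one_iff_le_ceil hx).mp (hsupp ω).2⟩
  measure_eq i hi := by
    obtain ⟨h1, hle⟩ := Finset.mem_Icc.mp hi
    exact hlaw i h1 ((natCast_lt_add_one_iff_le_ceil hx).mpr hle)

variable [IsProbabilityMeasure μ]

theorem sum_measureReal_eq_one (h : IsTruncatedInvSqLaw μ W m b) :
    ∑ i ∈ Finset.Icc 1 m, μ.real (W ⁻¹' {i}) = 1 := by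
  rw [sum_measureReal_preimage_singleton _ fun i _ => h.measurable (measurableSet_singleton i),
    Set.preimage_eq_univ_iff.mpr fun _ ⟨ω, hω⟩ => hω ▸ h.mem_Icc ω, probReal_univ]

theorem pos (h : IsTruncatedInvSqLaw μ W m b) : 0 < b := by
  by_contra! hb
  have hzero : ∑ i ∈ Finset.Icc 1 m, μ.real (W ⁻¹' {i}) = 0 := Finset.sum_eq_zero fun i hi => by
    rw [measureReal_def, h.measure_eq i hi, ENNReal.toReal_ofReal',
      max_eq_right (div_nonpos_of_nonpos_of_nonneg hb (by positivity))]
  linarith [h.sum_measureReal_eq_one]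

theorem measureReal_eq (h : IsTruncatedInvSqLaw μ W m b) {i : ℕ} (hi : i ∈ Finset.Icc 1 m) :
    μ.real (W ⁻¹' {i}) = b / i ^ 2 := by
  rw [measureReal_def, h.measure_eq i hi, ENNReal.toReal_ofReal (by have := h.pos; positivity)]

theorem mul_sum_inv_sq_eq_one (h : IsTruncatedInvSqLaw μ W m b) :
    b * ∑ i ∈ Finset.Icc 1 m, ((i : ℝ) ^ 2)⁻¹ = 1 := by
  rw [← h.sum_measureReal_eq_one, Finset.mul_sum]
  exact Finset.sum_congr rfl fun i hi => by rw [h.measureReal_eq hi, div_eq_mul_inv]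

theorem one_half_le (h : IsTruncatedInvSqLaw μ W m b) : 1 / 2 ≤ b := by
  nlinarith [h.mul_sum_inv_sq_eq_one, sum_Icc_inv_sq_le_two m, h.pos]

theorem integral_eq (h : IsTruncatedInvSqLaw μ W m b) :
    ∫ ω, (W ω : ℝ) ∂μ = b * harmonic m := by
  rw [integral_comp_eq_sum_measureReal h.measurable h.mem_Icc Nat.cast, harmonic_eq_sum_Icc,
    Rat.cast_sum, Finset.mul_sum]
  refine Finset.sum_congr rfl fun i hi => ?_
  have : (i : ℝ) ≠ 0 := by have := (Finset.mem_Icc.mp hi).1; positivity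
  rw [h.measureReal_eq hi]
  push_cast
  field_simp

theorem integrable (h : IsTruncatedInvSqLaw μ W m b) : Integrable (fun ω => (W ω : ℝ)) μ :=
  .of_bound (by have := h.measurable; fun_prop) m (ae_of_all μ fun ω => by
    simpa using (Finset.mem_Icc.mp (h.mem_Icc ω)).2)

theorem integral_sum_Icc {Z : ℕ → Ω → ℕ} (h : ∀ i, IsTruncatedInvSqLaw μ (Z i) m b) (τ : ℕ) :
    ∫ ω, ∑ i ∈ Finset.Icc 1 τ, (Z i ω : ℝ) ∂μ = τ * b * harmonic m := by
  rw [integral_finsetSum _ fun i _ => (h i).integrable]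
  simp [(h _).integral_eq, mul_assoc]

end IsTruncatedInvSqLaw

theorem abs_harmonic_ceil_mul_log_sub_log_le {t : ℝ} (ht : 1 ≤ t) (hll : 1 ≤ log (log t)) :
    |(harmonic ⌈t * log (log t)⌉₊ : ℝ) - log t| ≤ 2 + log (log t) := by
  have h := abs_harmonic_ceil_sub_log_le (x := t * log (log t)) (by nlinarith)
  rw [log_mul (by positivity) (by positivity)] at h
  have := log_nonneg hll
  have := log_le_sub_one_of_pos (show 0 < log (log t) by linarith)
  have := log_two_lt_d9
  rw [abs_le] at h ⊢
  constructor <;> linarith [h.1, h.2]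

theorem eventually_loglog_bounds {ε : ℝ} (hε : 0 < ε) :
    ∀ᶠ t : ℕ in atTop, 3 ≤ t ∧ 1 ≤ log (log t) ∧
      2 + log (log t) ≤ ε / 2 * log t ^ ((3 : ℝ) / 4) ∧
      log (log t) * log t ^ ((2 : ℝ) / 3) ≤ ε / 4 * log t ^ ((3 : ℝ) / 4) := by
  have hlog : Tendsto (fun t : ℕ => log t) atTop atTop :=
    tendsto_log_atTop.comp tendsto_natCast_atTop_atTop
  have hmean_o := (isLittleO_const_add_log_rpow_atTop 2 (r := 3 / 4) (by norm_num)).bound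
    (by positivity : 0 < ε / 2)
  have hfluct_o := (isLittleO_log_mul_rpow_atTop (r := 2 / 3) (s := 3 / 4) (by norm_num)).bound
    (by positivity : 0 < ε / 4)
  filter_upwards [eventually_ge_atTop 3, hlog.eventually (eventually_ge_atTop 0),
    hlog.eventually (tendsto_log_atTop.eventually_ge_atTop 1), hlog.eventually hmean_o,
    hlog.eventually hfluct_o] with t ht3 hlg hll hmean hfluct
  simp only [norm_eq_abs, abs_of_nonneg (rpow_nonneg hlg _)] at hmean hfluct
  exact ⟨ht3, hll, (le_abs_self _).trans hmean, (le_abs_self _).trans hfluct⟩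

theorem deviation_threshold_le_half_error {t τ ll b lg ε : ℝ} (ht : 0 ≤ t) (hτ : t / ll ≤ τ)
    (hll : 0 < ll) (hb : 1 / 2 ≤ b) (hε : 0 ≤ ε) (hlg : 0 ≤ lg)
    (hfluct : ll * lg ^ ((2 : ℝ) / 3) ≤ ε / 4 * lg ^ ((3 : ℝ) / 4)) :
    t * lg ^ ((2 : ℝ) / 3) ≤ τ * b * (ε / 2 * lg ^ ((3 : ℝ) / 4)) := by
  have hτ0 : 0 ≤ τ := (div_nonneg ht hll.le).trans hτ
  replace hτ : t ≤ τ * ll := (div_le_iff₀ hll).mp hτ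
  calc t * lg ^ ((2 : ℝ) / 3) ≤ τ * ll * lg ^ ((2 : ℝ) / 3) := by gcongr
    _ = τ * (ll * lg ^ ((2 : ℝ) / 3)) := by ring
    _ ≤ τ * (ε / 4 * lg ^ ((3 : ℝ) / 4)) := by gcongr
    _ ≤ τ * b * (ε / 2 * lg ^ ((3 : ℝ) / 4)) := by
      have : 0 ≤ τ * (ε * lg ^ ((3 : ℝ) / 4)) := by positivity
      nlinarith

theorem edge_count_asymptotics_general
    {Ω : Type*} [MeasurableSpace Ω] (μ : Measure Ω) [IsProbabilityMeasure μ]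
    (Z : ℕ → ℕ → Ω → ℕ) (hmeas : ∀ t i, Measurable (Z t i))
    (hsupp : ∀ t : ℕ, 3 ≤ t → ∀ i ω, 1 ≤ Z t i ω ∧ (Z t i ω : ℝ) < truncpt t)
    (hdist : ∀ t : ℕ, 3 ≤ t → ∀ i_0 : ℕ, ∀ i : ℕ, 1 ≤ i → (i : ℝ) < truncpt t →
      μ {ω | Z t i_0 ω = i} = ENNReal.ofReal (betapp t / (i : ℝ) ^ 2))
    (L : ℕ → ℕ → Ω → ℝ)
    (hL : ∀ t τ ω, L t τ ω = ∑ i ∈ Finset.Icc 1 τ, (Z t i ω : ℝ)) :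
    ∀ ε : ℝ, 0 < ε → ∃ T : ℕ, ∀ t : ℕ, T ≤ t → ∀ s : ℕ,
      (t : ℝ) / Real.log (Real.log (t : ℝ)) ≤ (s : ℝ) → s ≤ t →
      (∀ τ : ℕ, (t : ℝ) / Real.log (Real.log (t : ℝ)) ≤ (τ : ℝ) → τ ≤ s →
        |(∫ ω, L t τ ω ∂μ) - (τ : ℝ) * betapp t * Real.log (t : ℝ)| ≤
          ε * (Real.log (t : ℝ)) ^ (-(1 : ℝ) / 4) *
            ((τ : ℝ) * betapp t * Real.log (t : ℝ))) ∧
      (∀ ω : Ω,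
        (∀ σ : ℕ, 1 ≤ σ → σ ≤ s →
          |L t σ ω - ∫ ω', L t σ ω' ∂μ| ≤
            (t : ℝ) * (Real.log (t : ℝ)) ^ ((2 : ℝ) / 3)) →
        ∀ τ : ℕ, (t : ℝ) / Real.log (Real.log (t : ℝ)) ≤ (τ : ℝ) → τ ≤ s →
          |L t τ ω - (τ : ℝ) * betapp t * Real.log (t : ℝ)| ≤
            ε * (Real.log (t : ℝ)) ^ (-(1 : ℝ) / 4) *
              ((τ : ℝ) * betapp t * Real.log (t : ℝ))) := by
  intro ε hε
  obtain ⟨T, hT⟩ := eventually_atTop.mp (eventually_loglog_bounds hε)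
  refine ⟨T, fun t ht s _ _ => ?_⟩
  obtain ⟨ht3, hll, hmean, hfluct⟩ := hT t ht
  set lg := log (t : ℝ)
  set b := betapp t
  set H : ℝ := (harmonic ⌈t * log lg⌉₊ : ℝ)
  have ht1 : (1 : ℝ) < t := by exact_mod_cast (by omega : 1 < t)
  have hlg : 0 < lg := log_pos ht1
  have hlaw : ∀ i, IsTruncatedInvSqLaw μ (Z t i) ⌈t * log lg⌉₊ b := fun i =>
    .of_lt_add_one (by nlinarith) (hmeas t i) (hsupp t ht3 i) (hdist t ht3 i)
  have hb : 1 / 2 ≤ b := (hlaw 0).one_half_le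
  have hEL (τ : ℕ) : ∫ ω, L t τ ω ∂μ = τ * b * H := by
    simp only [hL, IsTruncatedInvSqLaw.integral_sum_Icc hlaw, H]
  have hscale (τ : ℕ) :
      ε * lg ^ (-(1 : ℝ) / 4) * (τ * b * lg) = τ * b * (ε * lg ^ ((3 : ℝ) / 4)) := by
    linear_combination ε * τ * b * rpow_neg_one_div_four_mul_self hlg
  have hmean_err (τ : ℕ) : |τ * b * H - τ * b * lg| ≤ τ * b * (ε / 2 * lg ^ ((3 : ℝ) / 4)) := by
    rw [← mul_sub, abs_mul, abs_of_nonneg (mul_nonneg τ.cast_nonneg (by linarith))]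
    gcongr
    exact (abs_harmonic_ceil_mul_log_sub_log_le ht1.le hll).trans hmean
  refine ⟨fun τ _ _ => ?_, fun ω hdev τ hτ hτs => ?_⟩
  · rw [hEL, hscale]
    exact (hmean_err τ).trans (by gcongr; linarith)
  · have hτ1 : 1 ≤ τ := Nat.cast_pos.mp ((div_pos (by linarith) (by linarith)).trans_le hτ)
    have hdev_τ := hEL τ ▸ hdev τ hτ1 hτs
    rw [hscale]
    calc |L t τ ω - τ * b * lg| ≤ |L t τ ω - τ * b * H| + |τ * b * H - τ * b * lg| :=
          abs_sub_le _ _ _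
      _ ≤ τ * b * (ε / 2 * lg ^ ((3 : ℝ) / 4)) + τ * b * (ε / 2 * lg ^ ((3 : ℝ) / 4)) :=
          add_le_add (hdev_τ.trans (deviation_threshold_le_half_error (by positivity) hτ
            (by linarith) hb hε.le hlg.le hfluct)) (hmean_err τ)
      _ = τ * b * (ε * lg ^ ((3 : ℝ) / 4)) := by ring

theorem edge_count_asymptotics
    {Ω : Type*} [MeasurableSpace Ω] (μ : Measure Ω) [IsProbabilityMeasure μ]
    (Z : ℕ → ℕ → Ω → ℕ) (hmeas : ∀ t i, Measurable (Z t i))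
    (hsupp : ∀ t : ℕ, 3 ≤ t → ∀ i ω, 1 ≤ Z t i ω ∧ (Z t i ω : ℝ) < truncpt t)
    (hdist : ∀ t : ℕ, 3 ≤ t → ∀ i_0 : ℕ, ∀ i : ℕ, 1 ≤ i → (i : ℝ) < truncpt t →
      μ {ω | Z t i_0 ω = i} = ENNReal.ofReal (betapp t / (i : ℝ) ^ 2))
    (hindep : ∀ t : ℕ, 3 ≤ t → iIndepFun (Z t) μ)
    (L : ℕ → ℕ → Ω → ℝ)
    (hL : ∀ t τ ω, L t τ ω = ∑ i ∈ Finset.Icc 1 τ, (Z t i ω : ℝ)) :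
    ∀ ε : ℝ, 0 < ε → ∃ T : ℕ, ∀ t : ℕ, T ≤ t → ∀ s : ℕ,
      (t : ℝ) / Real.log (Real.log (t : ℝ)) ≤ (s : ℝ) → s ≤ t →
      (∀ τ : ℕ, (t : ℝ) / Real.log (Real.log (t : ℝ)) ≤ (τ : ℝ) → τ ≤ s →
        |(∫ ω, L t τ ω ∂μ) - (τ : ℝ) * betapp t * Real.log (t : ℝ)| ≤
          ε * (Real.log (t : ℝ)) ^ (-(1 : ℝ) / 4) *
            ((τ : ℝ) * betapp t * Real.log (t : ℝ))) ∧
      (∀ ω : Ω,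
        (∀ σ : ℕ, 1 ≤ σ → σ ≤ s →
          |L t σ ω - ∫ ω', L t σ ω' ∂μ| ≤
            (t : ℝ) * (Real.log (t : ℝ)) ^ ((2 : ℝ) / 3)) →
        ∀ τ : ℕ, (t : ℝ) / Real.log (Real.log (t : ℝ)) ≤ (τ : ℝ) → τ ≤ s →
          |L t τ ω - (τ : ℝ) * betapp t * Real.log (t : ℝ)| ≤
            ε * (Real.log (t : ℝ)) ^ (-(1 : ℝ) / 4) *
              ((τ : ℝ) * betapp t * Real.log (t : ℝ))) :=
  edge_count_asymptotics_general μ Z hmeas hsupp hdist L hL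
end

section
/- Set t₀ = t / log log t and let Z₁, Z₂, … be i.i.d. copies of Z(t). For ℓ ∈ {1,2} and every ε > 0, there exists T such that for all t ≥ T and all integers s with t₀ ≤ s ≤ t, E[(∑_{j=1}^s Z_j)^{−ℓ}] ≤ (1 + ε) / (β''·s·log t)^ℓ. -/
open MeasureTheory ProbabilityTheory Real Filter

/-!
Write `S` for a sum of `n` independent copies of `Z(t)`, which is supported on `{1, …, N}` with
`N ≈ t log log t`. Its mean is `n β'' H_N ≥ n β'' log t` (`H_N` the harmonic number) and its
variance is at most `n β'' N`. Since `S ≥ n` pointwise, Chebyshev's inequality bounds `E[S⁻¹]`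
by `((1 - δ) E[S])⁻¹` plus `n⁻¹` times the probability of the lower tail, and the tail term is
negligible once `n ≳ t / log log t` because `(log log t)² = o(log t)`. For `ℓ = 2`, split `S`
into two independent halves and use `(S₁ + S₂)⁻² ≤ (4 S₁ S₂)⁻¹`.
-/

open scoped Finset ENNReal

section InverseMoments

variable {Ω : Type*} [MeasurableSpace Ω] {μ : Measure Ω}

lemma integrable_inv_of_le [IsFiniteMeasure μ] {S : Ω → ℝ} (hS : Measurable S) {m : ℝ}
    (hm : 0 < m) (hmS : ∀ ω, m ≤ S ω) : Integrable (fun ω => (S ω)⁻¹) μ :=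
  .of_bound hS.inv.aestronglyMeasurable m⁻¹ <| ae_of_all _ fun ω => by
    rw [norm_inv, Real.norm_of_nonneg (hm.le.trans (hmS ω))]
    exact inv_anti₀ hm (hmS ω)

lemma integral_inv_le_add_measureReal [IsProbabilityMeasure μ] {S : Ω → ℝ} (hS : Measurable S)
    {m c : ℝ} (hm : 0 < m) (hmS : ∀ ω, m ≤ S ω) (hc : 0 < c) :
    ∫ ω, (S ω)⁻¹ ∂μ ≤ c⁻¹ + m⁻¹ * μ.real {ω | S ω < c} := by
  set B := {ω | S ω < c}
  have hB : MeasurableSet B := hS measurableSet_Iio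
  have hpt : ∀ ω, (S ω)⁻¹ ≤ c⁻¹ + m⁻¹ * B.indicator 1 ω := by
    intro ω
    by_cases h : S ω < c
    · simpa [B, h] using (inv_anti₀ hm (hmS ω)).trans (le_add_of_nonneg_left (inv_pos.2 hc).le)
    · simpa [B, h] using inv_anti₀ hc (not_lt.1 h)
  calc ∫ ω, (S ω)⁻¹ ∂μ ≤ ∫ ω, c⁻¹ + m⁻¹ * B.indicator 1 ω ∂μ :=
        integral_mono (integrable_inv_of_le hS hm hmS)
          ((integrable_const _).add (((integrable_const 1).indicator hB).const_mul _)) hpt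
    _ = c⁻¹ + m⁻¹ * μ.real B := by
        rw [integral_add (integrable_const _) (((integrable_const 1).indicator hB).const_mul _),
          integral_const_mul, integral_indicator_one hB]
        simp

lemma measureReal_lt_sub_le_variance [IsFiniteMeasure μ] {S : Ω → ℝ} (hS : MemLp S 2 μ) {c : ℝ}
    (hc : 0 < c) : μ.real {ω | S ω < μ[S] - c} ≤ variance S μ / c ^ 2 := by
  have hsub : {ω | S ω < μ[S] - c} ⊆ {ω | c ≤ |S ω - μ[S]|} := fun ω (hω : S ω < μ[S] - c) => by
    show c ≤ |S ω - μ[S]|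
    exact le_abs.2 (Or.inr (by linarith))
  exact (measureReal_mono hsub).trans (ENNReal.toReal_le_of_le_ofReal
    (div_nonneg (variance_nonneg _ _) (sq_nonneg _)) (meas_ge_le_variance_div_sq hS hc))

lemma integral_inv_le_of_variance [IsProbabilityMeasure μ] {S : Ω → ℝ} (hSm : Measurable S)
    (hS : MemLp S 2 μ) {m δ : ℝ} (hm : 0 < m) (hmS : ∀ ω, m ≤ S ω) (hδ : 0 < δ) (hδ1 : δ < 1) :
    ∫ ω, (S ω)⁻¹ ∂μ ≤ ((1 - δ) * μ[S])⁻¹ + m⁻¹ * (variance S μ / (δ * μ[S]) ^ 2) := by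
  have hES : m ≤ μ[S] := by
    simpa using integral_mono (integrable_const m) (hS.integrable one_le_two) hmS
  have htail := measureReal_lt_sub_le_variance hS (c := δ * μ[S]) (mul_pos hδ (hm.trans_le hES))
  rw [show μ[S] - δ * μ[S] = (1 - δ) * μ[S] by ring] at htail
  calc ∫ ω, (S ω)⁻¹ ∂μ ≤ ((1 - δ) * μ[S])⁻¹ + m⁻¹ * μ.real {ω | S ω < (1 - δ) * μ[S]} :=
        integral_inv_le_add_measureReal hSm hm hmS (mul_pos (by linarith) (by linarith))
    _ ≤ _ := by gcongr

lemma integral_inv_add_sq_le [IsProbabilityMeasure μ] {S T : Ω → ℝ} (hST : S ⟂ᵢ[μ] T)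
    (hS : Measurable S) (hT : Measurable T) {m : ℝ} (hm : 0 < m) (hmS : ∀ ω, m ≤ S ω)
    (hmT : ∀ ω, m ≤ T ω) :
    ∫ ω, ((S ω + T ω) ^ 2)⁻¹ ∂μ ≤ 4⁻¹ * ((∫ ω, (S ω)⁻¹ ∂μ) * ∫ ω, (T ω)⁻¹ ∂μ) := by
  have hmST : ∀ ω, 4 * m ^ 2 ≤ 4 * (S ω * T ω) := fun ω => by
    have := mul_le_mul (hmS ω) (hmT ω) hm.le (hm.le.trans (hmS ω))
    nlinarith
  have hAMGM : ∀ ω, 4 * (S ω * T ω) ≤ (S ω + T ω) ^ 2 := fun ω => by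
    nlinarith [sq_nonneg (S ω - T ω)]
  have hinv : (fun ω => (S ω)⁻¹) ⟂ᵢ[μ] fun ω => (T ω)⁻¹ := hST.comp measurable_inv measurable_inv
  calc ∫ ω, ((S ω + T ω) ^ 2)⁻¹ ∂μ ≤ ∫ ω, (4 * (S ω * T ω))⁻¹ ∂μ :=
        integral_mono (integrable_inv_of_le ((hS.add hT).pow_const 2) (by positivity)
            fun ω => (hmST ω).trans (hAMGM ω))
          (integrable_inv_of_le (by fun_prop) (by positivity) hmST)
          fun ω => inv_anti₀ (by nlinarith [hmST ω]) (hAMGM ω)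
    _ = 4⁻¹ * ∫ ω, (S ω)⁻¹ * (T ω)⁻¹ ∂μ := by
        simp_rw [mul_inv]; exact integral_const_mul _ _
    _ = 4⁻¹ * ((∫ ω, (S ω)⁻¹ ∂μ) * ∫ ω, (T ω)⁻¹ ∂μ) := by
        rw [hinv.integral_fun_mul_eq_mul_integral hS.inv.aestronglyMeasurable
          hT.inv.aestronglyMeasurable]

lemma ProbabilityTheory.iIndepFun.indepFun_sum_natCast {ι : Type*} {W : ι → Ω → ℕ}
    (hind : iIndepFun W μ) (hW : ∀ j, Measurable (W j)) {F G : Finset ι} (hFG : Disjoint F G) :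
    (fun ω => ∑ j ∈ F, (W j ω : ℝ)) ⟂ᵢ[μ] fun ω => ∑ j ∈ G, (W j ω : ℝ) := by
  have hsum : ∀ H : Finset ι, Measurable fun v : H → ℕ => ∑ j, (v j : ℝ) := fun H =>
    Finset.measurable_sum _ fun j _ => measurable_from_top.comp (measurable_pi_apply j)
  convert (hind.indepFun_finset F G hFG hW).comp (hsum F) (hsum G) using 1 <;> ext ω
  exacts [(Finset.sum_coe_sort F fun j => (W j ω : ℝ)).symm,
    (Finset.sum_coe_sort G fun j => (W j ω : ℝ)).symm]

end InverseMoments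

section TruncatedPowerLaw

variable {Ω : Type*} [MeasurableSpace Ω] {μ : Measure Ω}

lemma integral_comp_eq_sum [IsFiniteMeasure μ] {X : Ω → ℕ} (hX : Measurable X) {F : Finset ℕ}
    (hF : ∀ ω, X ω ∈ F) (f : ℕ → ℝ) :
    ∫ ω, f (X ω) ∂μ = ∑ i ∈ F, μ.real {ω | X ω = i} * f i := by
  have hmeas : ∀ i, MeasurableSet {ω | X ω = i} := fun i => hX (measurableSet_singleton i)
  have hpt : ∀ ω, f (X ω) = ∑ i ∈ F, {ω | X ω = i}.indicator (fun _ => f i) ω := fun ω => by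
    rw [Finset.sum_eq_single_of_mem (X ω) (hF ω) fun i _ hi => by simp [hi.symm]]
    simp
  simp_rw [hpt]
  rw [integral_finsetSum _ fun i _ => (integrable_const _).indicator (hmeas i)]
  simp_rw [integral_indicator_const _ (hmeas _), smul_eq_mul]

structure IsTruncPowerLaw (μ : Measure Ω) (X : Ω → ℕ) (N : ℕ) (b : ℝ) : Prop where
  measurable : Measurable X
  mem_Icc : ∀ ω, X ω ∈ Finset.Icc 1 N
  measure_eq : ∀ i ∈ Finset.Icc 1 N, μ {ω | X ω = i} = ENNReal.ofReal (b / (i : ℝ) ^ 2)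

namespace IsTruncPowerLaw

variable [IsProbabilityMeasure μ] {X : Ω → ℕ} {N : ℕ} {b : ℝ}

lemma integral_comp_eq_sum_ofReal (hX : IsTruncPowerLaw μ X N b) (f : ℕ → ℝ) :
    ∫ ω, f (X ω) ∂μ = ∑ i ∈ Finset.Icc 1 N, (ENNReal.ofReal (b / (i : ℝ) ^ 2)).toReal * f i := by
  rw [integral_comp_eq_sum hX.measurable hX.mem_Icc]
  exact Finset.sum_congr rfl fun i hi => by rw [measureReal_def, hX.measure_eq i hi]

lemma coeff_pos (hX : IsTruncPowerLaw μ X N b) : 0 < b := by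
  by_contra! hb
  have h := hX.integral_comp_eq_sum_ofReal fun _ => 1
  simp only [integral_const, probReal_univ, smul_eq_mul, mul_one] at h
  rw [Finset.sum_eq_zero fun i _ => by
    rw [ENNReal.ofReal_of_nonpos (div_nonpos_of_nonpos_of_nonneg hb (sq_nonneg _)),
      ENNReal.toReal_zero]] at h
  exact one_ne_zero h

lemma integral_comp (hX : IsTruncPowerLaw μ X N b) (f : ℕ → ℝ) :
    ∫ ω, f (X ω) ∂μ = ∑ i ∈ Finset.Icc 1 N, b / (i : ℝ) ^ 2 * f i := by
  rw [hX.integral_comp_eq_sum_ofReal]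
  exact Finset.sum_congr rfl fun i _ => by
    rw [ENNReal.toReal_ofReal (div_nonneg hX.coeff_pos.le (sq_nonneg _))]

lemma integral_natCast (hX : IsTruncPowerLaw μ X N b) :
    ∫ ω, (X ω : ℝ) ∂μ = b * harmonic N := by
  rw [hX.integral_comp (fun i => (i : ℝ)), harmonic_eq_sum_Icc, Rat.cast_sum, Finset.mul_sum]
  refine Finset.sum_congr rfl fun i hi => ?_
  have hi : (i : ℝ) ≠ 0 := Nat.cast_ne_zero.2 (Nat.one_le_iff_ne_zero.1 (Finset.mem_Icc.1 hi).1)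
  push_cast
  field_simp

lemma integral_natCast_sq (hX : IsTruncPowerLaw μ X N b) :
    ∫ ω, (X ω : ℝ) ^ 2 ∂μ = b * N := by
  rw [hX.integral_comp (fun i => (i : ℝ) ^ 2), Finset.sum_congr rfl fun i hi => by
    have hi : (i : ℝ) ≠ 0 := Nat.cast_ne_zero.2 (Nat.one_le_iff_ne_zero.1 (Finset.mem_Icc.1 hi).1)
    exact div_mul_cancel₀ b (pow_ne_zero 2 hi)]
  simp [mul_comm]

lemma memLp_natCast (hX : IsTruncPowerLaw μ X N b) (p : ℝ≥0∞) :
    MemLp (fun ω => (X ω : ℝ)) p μ :=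
  .of_bound (measurable_from_top.comp hX.measurable).aestronglyMeasurable N <|
    ae_of_all _ fun ω => by
      simpa using (Finset.mem_Icc.1 (hX.mem_Icc ω)).2

lemma variance_natCast_le (hX : IsTruncPowerLaw μ X N b) :
    variance (fun ω => (X ω : ℝ)) μ ≤ b * N :=
  (variance_le_expectation_sq (hX.memLp_natCast 2).aestronglyMeasurable).trans_eq
    hX.integral_natCast_sq

lemma one_le (hX : IsTruncPowerLaw μ X N b) : 1 ≤ N := by
  obtain ⟨ω⟩ := nonempty_of_isProbabilityMeasure μ
  exact (Finset.mem_Icc.1 (hX.mem_Icc ω)).1.trans (Finset.mem_Icc.1 (hX.mem_Icc ω)).2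

end IsTruncPowerLaw

end TruncatedPowerLaw

section IIDSums

variable {Ω : Type*} [MeasurableSpace Ω] {μ : Measure Ω} {ι : Type*} {W : ι → Ω → ℕ} {N : ℕ}
  {b : ℝ}

lemma card_le_sum_natCast (hW : ∀ j, IsTruncPowerLaw μ (W j) N b) (F : Finset ι) (ω : Ω) :
    (#F : ℝ) ≤ ∑ j ∈ F, (W j ω : ℝ) := by
  simpa using Finset.card_nsmul_le_sum F (fun j => (W j ω : ℝ)) 1 fun j _ => by
    exact_mod_cast (Finset.mem_Icc.1 ((hW j).mem_Icc ω)).1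

variable [IsProbabilityMeasure μ]

lemma integral_sum_natCast (hW : ∀ j, IsTruncPowerLaw μ (W j) N b) (F : Finset ι) :
    ∫ ω, ∑ j ∈ F, (W j ω : ℝ) ∂μ = #F * (b * harmonic N) := by
  rw [integral_finsetSum _ fun j _ => memLp_one_iff_integrable.1 ((hW j).memLp_natCast 1)]
  simp [(hW _).integral_natCast]

lemma variance_sum_natCast_le (hW : ∀ j, IsTruncPowerLaw μ (W j) N b) (hind : iIndepFun W μ)
    (F : Finset ι) : variance (fun ω => ∑ j ∈ F, (W j ω : ℝ)) μ ≤ #F * (b * N) := by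
  have hind' : iIndepFun (fun j ω => (W j ω : ℝ)) μ := hind.comp _ fun _ => measurable_from_top
  have hsum : (fun ω => ∑ j ∈ F, (W j ω : ℝ)) = ∑ j ∈ F, fun ω => (W j ω : ℝ) := by ext; simp
  rw [hsum, IndepFun.variance_sum (fun j _ => (hW j).memLp_natCast 2)
    fun i _ j _ hij => hind'.indepFun hij]
  simpa using Finset.sum_le_sum fun j (_ : j ∈ F) => (hW j).variance_natCast_le

lemma integral_inv_sum_le (hW : ∀ j, IsTruncPowerLaw μ (W j) N b) (hind : iIndepFun W μ)
    {F : Finset ι} (hF : F.Nonempty) {δ : ℝ} (hδ : 0 < δ) (hδ1 : δ < 1) :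
    ∫ ω, (∑ j ∈ F, (W j ω : ℝ))⁻¹ ∂μ ≤
      ((1 - δ) * (#F * (b * harmonic N)))⁻¹ + N / (δ ^ 2 * b * harmonic N ^ 2 * #F ^ 2) := by
  have hb := (hW hF.choose).coeff_pos
  have hH : (0 : ℝ) < harmonic N := by
    exact_mod_cast harmonic_pos (Nat.one_le_iff_ne_zero.1 (hW hF.choose).one_le)
  have hn : (0 : ℝ) < #F := by exact_mod_cast hF.card_pos
  calc ∫ ω, (∑ j ∈ F, (W j ω : ℝ))⁻¹ ∂μ
      ≤ ((1 - δ) * μ[fun ω => ∑ j ∈ F, (W j ω : ℝ)])⁻¹ +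
          (#F : ℝ)⁻¹ * (variance (fun ω => ∑ j ∈ F, (W j ω : ℝ)) μ /
            (δ * μ[fun ω => ∑ j ∈ F, (W j ω : ℝ)]) ^ 2) :=
        integral_inv_le_of_variance
          (Finset.measurable_sum _ fun j _ => measurable_from_top.comp (hW j).measurable)
          (memLp_finsetSum _ fun j _ => (hW j).memLp_natCast 2) hn (card_le_sum_natCast hW F) hδ hδ1
    _ ≤ ((1 - δ) * (#F * (b * harmonic N)))⁻¹ +
          (#F : ℝ)⁻¹ * (#F * (b * N) / (δ * (#F * (b * harmonic N))) ^ 2) := by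
        rw [integral_sum_natCast hW]
        gcongr
        exact variance_sum_natCast_le hW hind F
    _ = ((1 - δ) * (#F * (b * harmonic N)))⁻¹ + N / (δ ^ 2 * b * harmonic N ^ 2 * #F ^ 2) := by
        field_simp

-- With `δ = ε / 4`, the condition `hN` makes the Chebyshev tail term at most `ε / 2`.
lemma integral_inv_sum_le_of_log_le (hW : ∀ j, IsTruncPowerLaw μ (W j) N b)
    (hind : iIndepFun W μ) {F : Finset ι} (hF : F.Nonempty) {ε L : ℝ} (hε : 0 < ε) (hε1 : ε ≤ 1)
    (hL : 0 < L) (hLN : L ≤ log (N + 1)) (hN : 32 * N * L ≤ ε ^ 3 * L ^ 2 * #F) :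
    ∫ ω, (∑ j ∈ F, (W j ω : ℝ))⁻¹ ∂μ ≤ (1 + ε) / (b * #F * L) := by
  have hb := (hW hF.choose).coeff_pos
  have hn : (0 : ℝ) < #F := by exact_mod_cast hF.card_pos
  set H : ℝ := (harmonic N : ℝ)
  have hLH : L ≤ H := hLN.trans (by exact_mod_cast log_add_one_le_harmonic N)
  have hH : 0 < H := hL.trans_le hLH
  have hmean : ((1 - ε / 4) * (#F * (b * H)))⁻¹ ≤ (1 + ε / 2) / (b * #F * L) := by
    rw [inv_eq_one_div, div_le_div_iff₀ (mul_pos (by linarith) (by positivity)) (by positivity)]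
    have hfactor : 1 ≤ (1 + ε / 2) * (1 - ε / 4) := by nlinarith
    calc 1 * (b * #F * L) ≤ 1 * (b * #F * H) := by gcongr
      _ ≤ (1 + ε / 2) * (1 - ε / 4) * (b * #F * H) := by gcongr
      _ = (1 + ε / 2) * ((1 - ε / 4) * (#F * (b * H))) := by ring
  have htail : N / ((ε / 4) ^ 2 * b * H ^ 2 * #F ^ 2) ≤ (ε / 2) / (b * #F * L) := by
    rw [div_le_div_iff₀ (by positivity) (by positivity)]
    calc N * (b * #F * L) = b * #F / 32 * (32 * N * L) := by ring
      _ ≤ b * #F / 32 * (ε ^ 3 * H ^ 2 * #F) :=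
          mul_le_mul_of_nonneg_left (hN.trans (by gcongr)) (by positivity)
      _ = ε / 2 * ((ε / 4) ^ 2 * b * H ^ 2 * #F ^ 2) := by ring
  calc ∫ ω, (∑ j ∈ F, (W j ω : ℝ))⁻¹ ∂μ
      ≤ ((1 - ε / 4) * (#F * (b * H)))⁻¹ + N / ((ε / 4) ^ 2 * b * H ^ 2 * #F ^ 2) :=
        integral_inv_sum_le hW hind hF (by positivity) (by linarith)
    _ ≤ (1 + ε / 2) / (b * #F * L) + (ε / 2) / (b * #F * L) := add_le_add hmean htail
    _ = (1 + ε) / (b * #F * L) := by ring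

end IIDSums

lemma integral_inv_sum_Icc_sq_le {Ω : Type*} [MeasurableSpace Ω] {μ : Measure Ω}
    [IsProbabilityMeasure μ] {W : ℕ → Ω → ℕ} {N : ℕ} {b : ℝ}
    (hW : ∀ j, IsTruncPowerLaw μ (W j) N b) (hind : iIndepFun W μ) {s : ℕ} (hs : 2 ≤ s) :
    ∫ ω, ((∑ j ∈ Finset.Icc 1 s, (W j ω : ℝ)) ^ 2)⁻¹ ∂μ ≤
      4⁻¹ * ((∫ ω, (∑ j ∈ Finset.Ioc 0 (s / 2), (W j ω : ℝ))⁻¹ ∂μ) *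
        ∫ ω, (∑ j ∈ Finset.Ioc (s / 2) s, (W j ω : ℝ))⁻¹ ∂μ) := by
  have hsplit : ∀ ω, ∑ j ∈ Finset.Icc 1 s, (W j ω : ℝ) =
      ∑ j ∈ Finset.Ioc 0 (s / 2), (W j ω : ℝ) + ∑ j ∈ Finset.Ioc (s / 2) s, (W j ω : ℝ) :=
    fun ω => (Finset.sum_Ioc_consecutive _ (Nat.zero_le _) (Nat.div_le_self s 2)).symm
  have hmeas : ∀ F : Finset ℕ, Measurable fun ω => ∑ j ∈ F, (W j ω : ℝ) := fun F =>
    Finset.measurable_sum _ fun j _ => measurable_from_top.comp (hW j).measurable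
  have hone : ∀ F : Finset ℕ, F.Nonempty → ∀ ω, 1 ≤ ∑ j ∈ F, (W j ω : ℝ) := fun F hF ω =>
    (Nat.one_le_cast.2 hF.card_pos).trans (card_le_sum_natCast hW F ω)
  simp_rw [hsplit]
  refine integral_inv_add_sq_le (hind.indepFun_sum_natCast (fun j => (hW j).measurable) ?_)
    (hmeas _) (hmeas _) one_pos (hone _ ?_) (hone _ ?_)
  · exact Finset.disjoint_left.2 fun j h₁ h₂ => by simp only [Finset.mem_Ioc] at h₁ h₂; omega
  · exact ⟨1, Finset.mem_Ioc.2 ⟨one_pos, by omega⟩⟩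
  · exact ⟨s, Finset.mem_Ioc.2 ⟨by omega, le_rfl⟩⟩

noncomputable def truncN (t : ℕ) : ℕ := ⌈truncpt t⌉₊ - 1

lemma mem_Icc_truncN {t i : ℕ} : i ∈ Finset.Icc 1 (truncN t) ↔ 1 ≤ i ∧ (i : ℝ) < truncpt t := by
  rw [Finset.mem_Icc, truncN, ← Nat.lt_ceil]
  omega

lemma isTruncPowerLaw_truncN {Ω : Type*} [MeasurableSpace Ω] {μ : Measure Ω} {X : Ω → ℕ} {t : ℕ}
    {b : ℝ} (hX : Measurable X) (hsupp : ∀ ω, 1 ≤ X ω ∧ (X ω : ℝ) < truncpt t)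
    (hlaw : ∀ i : ℕ, 1 ≤ i → (i : ℝ) < truncpt t →
      μ {ω | X ω = i} = ENNReal.ofReal (b / (i : ℝ) ^ 2)) :
    IsTruncPowerLaw μ X (truncN t) b where
  measurable := hX
  mem_Icc ω := mem_Icc_truncN.2 (hsupp ω)
  measure_eq i hi := hlaw i (mem_Icc_truncN.1 hi).1 (mem_Icc_truncN.1 hi).2

section Asymptotics

variable {t : ℕ}

lemma le_truncpt (hllt : 1 ≤ log (log t)) : (t : ℝ) ≤ truncpt t := by
  unfold truncpt
  nlinarith [Nat.cast_nonneg (α := ℝ) t]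

lemma truncN_add_one (ht : 1 ≤ t) (hllt : 1 ≤ log (log t)) :
    (truncN t : ℝ) + 1 = ⌈truncpt t⌉₊ := by
  have := Nat.ceil_pos.2 ((Nat.cast_pos.2 ht).trans_le (le_truncpt hllt))
  exact_mod_cast (show truncN t + 1 = ⌈truncpt t⌉₊ by unfold truncN; omega)

lemma log_le_log_truncN_add_one (ht : 1 ≤ t) (hllt : 1 ≤ log (log t)) :
    log t ≤ log (truncN t + 1) := by
  rw [truncN_add_one ht hllt]
  exact log_le_log (by exact_mod_cast ht) ((le_truncpt hllt).trans (Nat.le_ceil _))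

lemma truncN_le (ht : 1 ≤ t) (hllt : 1 ≤ log (log t)) :
    (truncN t : ℝ) ≤ 2 * t * log (log t) := by
  have hceil := Nat.ceil_lt_add_one ((Nat.cast_nonneg t).trans (le_truncpt hllt))
  rw [← truncN_add_one ht hllt] at hceil
  unfold truncpt at hceil
  nlinarith [(Nat.one_le_cast (α := ℝ)).2 ht]

lemma tendsto_log_log_natCast_atTop : Tendsto (fun t : ℕ => log (log t)) atTop atTop :=
  tendsto_log_atTop.comp (tendsto_log_atTop.comp tendsto_natCast_atTop_atTop)

lemma eventually_mul_log_log_sq_le {C : ℝ} (hC : 0 < C) :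
    ∀ᶠ t : ℕ in atTop, C * log (log t) ^ 2 ≤ log t := by
  have hlog : Tendsto (fun t : ℕ => log t) atTop atTop :=
    tendsto_log_atTop.comp tendsto_natCast_atTop_atTop
  filter_upwards [hlog.eventually ((isLittleO_pow_log_id_atTop (n := 2)).bound (inv_pos.2 hC))]
    with t h
  rw [norm_pow, Real.norm_eq_abs, sq_abs, id, Real.norm_of_nonneg (log_natCast_nonneg t)] at h
  have := mul_le_mul_of_nonneg_left h hC.le
  rwa [← mul_assoc, mul_inv_cancel₀ hC.ne', one_mul] at this

end Asymptotics

lemma sq_mul_le_four_mul_half_mul {ε : ℝ} (hε : 0 < ε) (hε1 : ε ≤ 1) {s : ℕ} (hs : 8 / ε ≤ s) :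
    (1 + ε / 8) ^ 2 * s ^ 2 ≤ (1 + ε) * (4 * (s / 2 : ℕ) * (s - s / 2 : ℕ)) := by
  have hsε : 8 ≤ s * ε := (div_le_iff₀ hε).1 hs
  have hs8 : (8 : ℝ) ≤ s := by nlinarith
  have hparity : (s : ℝ) ^ 2 - 1 ≤ 4 * (s / 2 : ℕ) * (s - s / 2 : ℕ) := by
    rcases Nat.even_or_odd' s with ⟨k, rfl | rfl⟩ <;> push_cast [Nat.mul_div_cancel_left,
      show (2 * k + 1) / 2 = k by omega, show 2 * k + 1 - k = k + 1 by omega,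
      show 2 * k - k = k by omega] <;> nlinarith
  nlinarith [mul_le_mul_of_nonneg_left hsε (Nat.cast_nonneg s)]

section Eventually

variable {Ω : Type*} [MeasurableSpace Ω] {μ : Measure Ω} [IsProbabilityMeasure μ]
  {Z : ℕ → ℕ → Ω → ℕ} {b : ℕ → ℝ}

lemma eventually_integral_inv_sum_le
    (hZ : ∀ᶠ t in atTop, (∀ j, IsTruncPowerLaw μ (Z t j) (truncN t) (b t)) ∧ iIndepFun (Z t) μ)
    {c ε : ℝ} (hc : 0 < c) (hε : 0 < ε) (hε1 : ε ≤ 1) :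
    ∀ᶠ t : ℕ in atTop, ∀ F : Finset ℕ, c * t ≤ #F * log (log t) →
      ∫ ω, (∑ j ∈ F, (Z t j ω : ℝ))⁻¹ ∂μ ≤ (1 + ε) / (b t * #F * log t) := by
  filter_upwards [hZ, eventually_ge_atTop 1, tendsto_log_log_natCast_atTop.eventually_ge_atTop 1,
    eventually_mul_log_log_sq_le (C := 64 / (c * ε ^ 3)) (by positivity)]
    with t ⟨hW, hind⟩ ht hllt hlog F hF
  have hL : 0 < log t := lt_of_lt_of_le (by positivity) hlog
  have hFne : F.Nonempty := by
    rw [← Finset.card_pos, ← Nat.cast_pos (α := ℝ)]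
    have : (0 : ℝ) < c * t := mul_pos hc (Nat.cast_pos.2 ht)
    nlinarith
  refine integral_inv_sum_le_of_log_le hW hind hFne hε hε1 hL (log_le_log_truncN_add_one ht hllt) ?_
  calc 32 * (truncN t : ℝ) * log t ≤ 32 * (2 * t * log (log t)) * log t := by
        gcongr; exact truncN_le ht hllt
    _ = 64 / c * (c * t) * log (log t) * log t := by field_simp; norm_num
    _ ≤ 64 / c * (#F * log (log t)) * log (log t) * log t := by gcongr
    _ = ε ^ 3 * log t * #F * (64 / (c * ε ^ 3) * log (log t) ^ 2) := by field_simp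
    _ ≤ ε ^ 3 * log t * #F * log t := by gcongr
    _ = ε ^ 3 * log t ^ 2 * #F := by ring

lemma eventually_integral_inv_sum_sq_le
    (hZ : ∀ᶠ t in atTop, (∀ j, IsTruncPowerLaw μ (Z t j) (truncN t) (b t)) ∧ iIndepFun (Z t) μ)
    {ε : ℝ} (hε : 0 < ε) (hε1 : ε ≤ 1) :
    ∀ᶠ t : ℕ in atTop, ∀ s : ℕ, (t : ℝ) ≤ s * log (log t) →
      ∫ ω, ((∑ j ∈ Finset.Icc 1 s, (Z t j ω : ℝ)) ^ 2)⁻¹ ∂μ ≤ (1 + ε) / (b t * s * log t) ^ 2 := by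
  filter_upwards [hZ, eventually_integral_inv_sum_le hZ (c := 1 / 3) (ε := ε / 8) (by norm_num)
      (by positivity) (by linarith), tendsto_log_log_natCast_atTop.eventually_ge_atTop 1,
    eventually_mul_log_log_sq_le (C := 8 / ε) (by positivity)]
    with t ⟨hW, hind⟩ hhalf hllt hlog s hs
  have hb := (hW 0).coeff_pos
  have hL : 0 < log t := lt_of_lt_of_le (by positivity) hlog
  have hs8 : 8 / ε ≤ s := by
    refine le_of_mul_le_mul_right ?_ (by linarith : 0 < log (log t))
    calc 8 / ε * log (log t) ≤ 8 / ε * log (log t) ^ 2 := by gcongr; nlinarith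
      _ ≤ log t := hlog
      _ ≤ t := log_le_self (Nat.cast_nonneg t)
      _ ≤ s * log (log t) := hs
  have hs8' : (8 : ℝ) ≤ s := le_trans (by rw [le_div_iff₀ hε]; linarith) hs8
  set a := s / 2
  have hcard₁ : (#(Finset.Ioc 0 a) : ℝ) = a := by simp
  have hcard₂ : (#(Finset.Ioc a s) : ℝ) = (s - a : ℕ) := by simp
  have hs3 : (s : ℝ) ≤ 3 * a := by
    have : (8 : ℕ) ≤ s := by exact_mod_cast hs8'
    exact_mod_cast (show s ≤ 3 * a by omega)
  have has : (a : ℝ) ≤ (s - a : ℕ) := by exact_mod_cast (show a ≤ s - a by omega)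
  have h₁ := hhalf (Finset.Ioc 0 a) (by rw [hcard₁]; nlinarith)
  have h₂ := hhalf (Finset.Ioc a s) (by rw [hcard₂]; nlinarith)
  rw [hcard₁] at h₁
  rw [hcard₂] at h₂
  have ha : (0 : ℝ) < a := by linarith
  have hr : (0 : ℝ) < (s - a : ℕ) := by linarith
  calc ∫ ω, ((∑ j ∈ Finset.Icc 1 s, (Z t j ω : ℝ)) ^ 2)⁻¹ ∂μ
      ≤ 4⁻¹ * ((∫ ω, (∑ j ∈ Finset.Ioc 0 a, (Z t j ω : ℝ))⁻¹ ∂μ) *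
          ∫ ω, (∑ j ∈ Finset.Ioc a s, (Z t j ω : ℝ))⁻¹ ∂μ) :=
        integral_inv_sum_Icc_sq_le hW hind (by exact_mod_cast (show (2 : ℝ) ≤ s by linarith))
    _ ≤ 4⁻¹ * ((1 + ε / 8) / (b t * a * log t) * ((1 + ε / 8) / (b t * (s - a : ℕ) * log t))) := by
        gcongr
    _ ≤ (1 + ε) / (b t * s * log t) ^ 2 := by
        have key := mul_le_mul_of_nonneg_right (sq_mul_le_four_mul_half_mul hε hε1 hs8)
          (sq_nonneg (b t * log t))
        rw [div_mul_div_comm, ← mul_div_assoc, div_le_div_iff₀ (by positivity) (by positivity)]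
        nlinarith [key]

end Eventually

theorem inverse_moment_bound
    {Ω : Type*} [MeasurableSpace Ω] (μ : Measure Ω) [IsProbabilityMeasure μ]
    (Z : ℕ → ℕ → Ω → ℕ) (hmeas : ∀ t i, Measurable (Z t i))
    (hsupp : ∀ t : ℕ, 3 ≤ t → ∀ i ω, 1 ≤ Z t i ω ∧ (Z t i ω : ℝ) < truncpt t)
    (hdist : ∀ t : ℕ, 3 ≤ t → ∀ i_0 : ℕ, ∀ i : ℕ, 1 ≤ i → (i : ℝ) < truncpt t →
      μ {ω | Z t i_0 ω = i} = ENNReal.ofReal (betapp t / (i : ℝ) ^ 2))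
    (hindep : ∀ t : ℕ, 3 ≤ t → iIndepFun (Z t) μ)
    (ℓ : ℕ) (hℓ : ℓ = 1 ∨ ℓ = 2) :
    ∀ ε : ℝ, 0 < ε → ∃ T : ℕ, ∀ t : ℕ, T ≤ t → ∀ s : ℕ,
      (t : ℝ) / Real.log (Real.log (t : ℝ)) ≤ (s : ℝ) → s ≤ t →
      ∫ ω, ((∑ j ∈ Finset.Icc 1 s, (Z t j ω : ℝ)) ^ ℓ)⁻¹ ∂μ ≤
        (1 + ε) / (betapp t * (s : ℝ) * Real.log (t : ℝ)) ^ ℓ := by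
  intro ε hε
  have hZ : ∀ᶠ t in atTop,
      (∀ j, IsTruncPowerLaw μ (Z t j) (truncN t) (betapp t)) ∧ iIndepFun (Z t) μ :=
    eventually_atTop.2 ⟨3, fun t ht => ⟨fun j => isTruncPowerLaw_truncN (hmeas t j)
      (hsupp t ht j) (hdist t ht j), hindep t ht⟩⟩
  have hε' : 0 < min ε 1 := lt_min hε one_pos
  obtain ⟨T, hT⟩ := eventually_atTop.1 <| hZ.and <|
    (eventually_integral_inv_sum_le hZ one_pos hε' (min_le_right ε 1)).and <|
    (eventually_integral_inv_sum_sq_le hZ hε' (min_le_right ε 1)).and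
    (tendsto_log_log_natCast_atTop.eventually_gt_atTop 0)
  refine ⟨T, fun t ht s hs _ => ?_⟩
  obtain ⟨⟨hW, -⟩, h₁, h₂, hllt⟩ := hT t ht
  have hts : (t : ℝ) ≤ s * log (log t) := (div_le_iff₀ hllt).1 hs
  have hmono : ∀ D : ℝ, 0 ≤ D → (1 + min ε 1) / D ≤ (1 + ε) / D := fun D hD => by
    gcongr
    exact min_le_left ε 1
  rcases hℓ with rfl | rfl
  · have hb := (hW 0).coeff_pos
    simpa using (h₁ (Finset.Icc 1 s) (by simpa using hts)).trans
      (hmono _ (mul_nonneg (by positivity) (log_natCast_nonneg t)))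
  · exact (h₂ s hts).trans (hmono _ (sq_nonneg _))
end

section
/- The limiting degree distribution of the PARID-model with exponent 2 is a probability distribution: the series ∑_{k=1}^∞ b_k converges and equals 1, where b_k = (2β(2) / (k(k+1)(k+2))) · ∑_{i=1}^k (1 + 1/i). Equivalently, ∑_{k=1}^∞ (2 / (k(k+1)(k+2))) · ∑_{i=1}^k (1 + 1/i) = π²/6. -/
/-!
Write `A n = ∑_{i=1}^n (1 + 1/i)`. Since `A (k+1) = A k + 1 + 1/(k+1)`, the `k`-th term
`2 A (k+1) / ((k+1)(k+2)(k+3))` equals `1/(k+1)^2 + u k - u (k+1)` with `u k = A k / ((k+1)(k+2))`.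
As `A k ≤ 2k`, `u k → 0`, and `u 0 = 0`, so the series telescopes to `∑ 1/(k+1)^2 = π²/6`;
the normalized series then sums to `1`.
-/

open Finset Filter Topology

theorem hasSum_of_eq_add_sub_succ {f g u : ℕ → ℝ} {a l : ℝ} (hf : ∀ k, 0 ≤ f k)
    (hg : HasSum g a) (hu : Tendsto u atTop (𝓝 l)) (hfgu : ∀ k, f k = g k + (u k - u (k + 1))) :
    HasSum f (a + (u 0 - l)) := by
  rw [hasSum_iff_tendsto_nat_of_nonneg hf]
  simp_rw [hfgu, sum_add_distrib, sum_range_sub']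
  exact hg.tendsto_sum_nat.add (tendsto_const_nhds.sub hu)

theorem hasSum_one_div_succ_sq : HasSum (fun n : ℕ => 1 / ((n : ℝ) + 1) ^ 2) (Real.pi ^ 2 / 6) := by
  simpa using (hasSum_nat_add_iff' 1).mpr hasSum_zeta_two

noncomputable def weightSum (n : ℕ) : ℝ := ∑ i ∈ Icc 1 n, (1 + 1 / (i : ℝ))

theorem weightSum_succ (n : ℕ) : weightSum (n + 1) = weightSum n + 1 + 1 / ((n : ℝ) + 1) := by
  rw [weightSum, sum_Icc_succ_top (by omega), ← weightSum]
  push_cast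
  ring

theorem weightSum_nonneg (n : ℕ) : 0 ≤ weightSum n :=
  sum_nonneg fun i _ => by positivity

theorem weightSum_le (n : ℕ) : weightSum n ≤ 2 * n := by
  have hle : ∀ i ∈ Icc 1 n, 1 + 1 / (i : ℝ) ≤ 2 := fun i hi => by
    have : (1 : ℝ) ≤ i := by exact_mod_cast (mem_Icc.mp hi).1
    linarith [div_le_one_of_le₀ this (by positivity)]
  calc weightSum n ≤ ∑ _i ∈ Icc 1 n, (2 : ℝ) := sum_le_sum hle
    _ = 2 * n := by simp [mul_comm]

noncomputable def weightTail (k : ℕ) : ℝ := weightSum k / (((k : ℝ) + 1) * ((k : ℝ) + 2))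

theorem weightTail_zero : weightTail 0 = 0 := by simp [weightTail, weightSum]

theorem tendsto_weightTail : Tendsto weightTail atTop (𝓝 0) := by
  have hbound : ∀ k, weightTail k ≤ 2 * (1 / ((k : ℝ) + 1)) := fun k => by
    rw [weightTail, div_le_iff₀ (by positivity)]
    have := weightSum_le k
    field_simp
    nlinarith
  refine squeeze_zero (fun k => div_nonneg (weightSum_nonneg k) (by positivity)) hbound ?_
  simpa using tendsto_one_div_add_atTop_nhds_zero_nat.const_mul (2 : ℝ)

theorem term_eq_add_weightTail_sub (k : ℕ) :
    2 / (((k : ℝ) + 1) * ((k : ℝ) + 2) * ((k : ℝ) + 3)) * weightSum (k + 1) =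
      1 / ((k : ℝ) + 1) ^ 2 + (weightTail k - weightTail (k + 1)) := by
  rw [weightTail, weightTail, weightSum_succ]
  push_cast
  field_simp
  ring

theorem limiting_degree_distribution_sums_to_one :
    HasSum (fun k : ℕ =>
      2 * (6 / Real.pi ^ 2) / (((k : ℝ) + 1) * ((k : ℝ) + 2) * ((k : ℝ) + 3)) *
        ∑ i ∈ Finset.Icc 1 (k + 1), (1 + 1 / (i : ℝ))) 1 ∧
    HasSum (fun k : ℕ =>
      2 / (((k : ℝ) + 1) * ((k : ℝ) + 2) * ((k : ℝ) + 3)) *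
        ∑ i ∈ Finset.Icc 1 (k + 1), (1 + 1 / (i : ℝ))) (Real.pi ^ 2 / 6) := by
  have hzeta : HasSum (fun k : ℕ =>
      2 / (((k : ℝ) + 1) * ((k : ℝ) + 2) * ((k : ℝ) + 3)) * weightSum (k + 1))
      (Real.pi ^ 2 / 6) := by
    simpa [weightTail_zero] using hasSum_of_eq_add_sub_succ
      (fun k => mul_nonneg (by positivity) (weightSum_nonneg _)) hasSum_one_div_succ_sq
      tendsto_weightTail term_eq_add_weightTail_sub
  refine ⟨?_, hzeta⟩
  have hnorm : 6 / Real.pi ^ 2 * (Real.pi ^ 2 / 6) = 1 := by field_simp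
  have hscaled := hzeta.mul_left (6 / Real.pi ^ 2)
  rw [hnorm] at hscaled
  refine (congrArg (fun f : ℕ → ℝ => HasSum f 1) (funext fun k => ?_)).mp hscaled
  rw [weightSum]
  ring
end
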